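/- arXiv:math-ph/0703078 — 6 statements merged into one kernel-verified Lean document; each statement's English description precedes it below -/
import Mathlib

section
/- With A, τ, G as above, assume τ is surjective. Then the kernel of τ is dense in H if and only if for every z ∈ ρ(A) one has Range(G(z)) ∩ D(A) = {0}. -/
open ContinuousLinearMap in
/-- If `B` is a surjective bounded operator between Hilbert spaces, every vector orthogonal
to `ker B` is in the range of the adjoint of `B`. -/
lemma mem_range_adjoint_of_surjective {E F : Type*}
    [NormedAddCommGroup E] [InnerProductSpace ℂ E] [CompleteSpace E]
    [NormedAddCommGroup F] [InnerProductSpace ℂ F] [CompleteSpace F]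
    (B : E →L[ℂ] F) (hB : Function.Surjective B) {x : E}
    (hx : ∀ y : E, B y = 0 → (inner ℂ x y : ℂ) = 0) :
    x ∈ Set.range B.adjoint := by
  set K : Submodule ℂ E := LinearMap.ker (B : E →ₗ[ℂ] F) with hK
  set C : Kᗮ →L[ℂ] F := B.comp Kᗮ.subtypeL with hC
  have hCker : LinearMap.ker (C : Kᗮ →ₗ[ℂ] F) = ⊥ := by
    rw [Submodule.eq_bot_iff]
    rintro ⟨q, hq⟩ hq0
    have hqK : q ∈ K := by
      simpa [hC, hK, LinearMap.mem_ker] using hq0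
    have : (inner ℂ q q : ℂ) = 0 := Submodule.inner_right_of_mem_orthogonal hqK hq
    have : q = 0 := by simpa [inner_self_eq_zero] using this
    simpa using this
  have hCrange : LinearMap.range (C : Kᗮ →ₗ[ℂ] F) = ⊤ := by
    rw [LinearMap.range_eq_top]
    intro f
    obtain ⟨y, rfl⟩ := hB f
    obtain ⟨k, hk, q, hq, rfl⟩ := K.exists_add_mem_mem_orthogonal y
    refine ⟨⟨q, hq⟩, ?_⟩
    have hk0 : B k = 0 := hk
    simp [hC, hk0]
  let e := ContinuousLinearEquiv.ofBijective C hCker hCrange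
  have hxK : x ∈ Kᗮ := by
    intro u hu
    have := hx u hu
    rw [← inner_conj_symm]
    simp [this]
  refine ⟨(e.symm : F →L[ℂ] Kᗮ).adjoint ⟨x, hxK⟩, ?_⟩
  apply ext_inner_right ℂ
  intro y
  rw [ContinuousLinearMap.adjoint_inner_left, ContinuousLinearMap.adjoint_inner_left]
  obtain ⟨k, hk, q, hq, rfl⟩ := K.exists_add_mem_mem_orthogonal y
  have hk0 : B k = 0 := hk
  have hBy : B (k + q) = e ⟨q, hq⟩ := by
    simp [e, ContinuousLinearEquiv.ofBijective, hC, hk0]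
  rw [hBy]
  simp only [ContinuousLinearEquiv.coe_coe, ContinuousLinearEquiv.symm_apply_apply]
  have hxk : (inner ℂ x k : ℂ) = 0 := hx k hk0
  have : (inner ℂ (⟨x, hxK⟩ : Kᗮ) (⟨q, hq⟩ : Kᗮ) : ℂ) = inner ℂ x q := rfl
  rw [this, inner_add_right, hxk, zero_add]

/-- with `A` self-adjoint (realised on the graph-norm space `D = H_A` via the
inclusion `ι`), `res z = (-A+z)⁻¹ : H → H_A` for `z` in the resolvent set `ρA`, `τ : H_A → 𝔥`
bounded surjective and `G(z) := (τ ∘ res z̄)*`, the kernel of `τ` is dense in `H` if and only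
if `Range (G z) ∩ D(A) = {0}` for every `z ∈ ρA`. -/
theorem stmt2 {H D 𝔥 : Type*}
    [NormedAddCommGroup H] [InnerProductSpace ℂ H] [CompleteSpace H]
    [NormedAddCommGroup D] [InnerProductSpace ℂ D] [CompleteSpace D]
    [NormedAddCommGroup 𝔥] [InnerProductSpace ℂ 𝔥] [CompleteSpace 𝔥]
    (ι : D →L[ℂ] H) (hι : Function.Injective ι) (hdense : DenseRange ι)
    (A : D →L[ℂ] H)
    (hgraph : ∀ x y : D, (inner ℂ x y : ℂ) = inner ℂ (A x) (A y) + inner ℂ (ι x) (ι y))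
    (hsym : ∀ x y : D, (inner ℂ (A x) (ι y) : ℂ) = inner ℂ (ι x) (A y))
    (ρA : Set ℂ) (hconj : ∀ z ∈ ρA, (starRingEnd ℂ) z ∈ ρA) (hI : Complex.I ∈ ρA)
    (res : ℂ → (H →L[ℂ] D))
    (hres : ∀ z ∈ ρA, Function.Bijective (res z) ∧
      ∀ x : H, z • ι (res z x) - A (res z x) = x)
    (τ : D →L[ℂ] 𝔥) (hτ : Function.Surjective τ) :
    Dense (ι '' {x : D | τ x = 0}) ↔
      ∀ z ∈ ρA,
        Set.range ((τ.comp (res ((starRingEnd ℂ) z))).adjoint) ∩ Set.range ι = {0} := by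
  -- the inverse identity: `res z (z • ι f - A f) = f` for `z ∈ ρA`
  have hinv : ∀ z ∈ ρA, ∀ f : D, res z (z • ι f - A f) = f := by
    intro z hz f
    obtain ⟨y, rfl⟩ := (hres z hz).1.2 f
    rw [(hres z hz).2 y]
  -- the key identity (★): ⟪ι (res z u), y⟫ = ⟪u, ι (res z̄ y)⟫
  have hstar : ∀ z ∈ ρA, ∀ u y : H,
      (inner ℂ (ι (res z u)) y : ℂ) = inner ℂ u (ι (res ((starRingEnd ℂ) z) y)) := by
    intro z hz u y
    set v := res z u with hv
    set p := res ((starRingEnd ℂ) z) y with hp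
    have hy : (starRingEnd ℂ) z • ι p - A p = y := (hres _ (hconj z hz)).2 y
    have hu : z • ι v - A v = u := (hres z hz).2 u
    calc (inner ℂ (ι v) y : ℂ) = inner ℂ (ι v) ((starRingEnd ℂ) z • ι p - A p) := by rw [hy]
      _ = (starRingEnd ℂ) z * inner ℂ (ι v) (ι p) - inner ℂ (ι v) (A p) := by
          rw [inner_sub_right, inner_smul_right]
      _ = (starRingEnd ℂ) z * inner ℂ (ι v) (ι p) - inner ℂ (A v) (ι p) := by rw [hsym]
      _ = inner ℂ (z • ι v - A v) (ι p) := by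
          rw [inner_sub_left, inner_smul_left]
      _ = inner ℂ u (ι p) := by rw [hu]
  constructor
  · -- density ⟹ trivial intersection
    intro hd z hz
    ext w
    simp only [Set.mem_inter_iff, Set.mem_range, Set.mem_singleton_iff]
    constructor
    · rintro ⟨⟨h, hh⟩, f, hf⟩
      -- u := z • ι f - A f is orthogonal to ι '' ker τ
      set u := z • ι f - A f with hu
      have horth : ∀ p : D, τ p = 0 → (inner ℂ u (ι p) : ℂ) = 0 := by
        intro p hp
        have hy : (starRingEnd ℂ) z • ι p - A p = ((starRingEnd ℂ) z) • ι p - A p := rfl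
        have hrp : res ((starRingEnd ℂ) z) ((starRingEnd ℂ) z • ι p - A p) = p := by
          have := hinv _ (hconj z hz) p
          simpa using this
        have hadj : (inner ℂ w ((starRingEnd ℂ) z • ι p - A p) : ℂ)
            = inner ℂ h (τ (res ((starRingEnd ℂ) z) ((starRingEnd ℂ) z • ι p - A p))) := by
          rw [← hh, ContinuousLinearMap.adjoint_inner_left]; rfl
        rw [hrp, hp, inner_zero_right] at hadj
        calc (inner ℂ u (ι p) : ℂ)
            = inner ℂ (z • ι f - A f) (ι p) := by rw [hu]
          _ = (starRingEnd ℂ) z * (inner ℂ (ι f) (ι p) : ℂ) - inner ℂ (A f) (ι p) := by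
              rw [inner_sub_left, inner_smul_left]
          _ = (starRingEnd ℂ) z * (inner ℂ (ι f) (ι p) : ℂ) - inner ℂ (ι f) (A p) := by
              rw [hsym]
          _ = inner ℂ (ι f) ((starRingEnd ℂ) z • ι p - A p) := by
              rw [inner_sub_right, inner_smul_right]
          _ = 0 := by rw [← hf] at hadj; exact hadj
      -- density forces u = 0
      have hu0 : u = 0 := by
        have hcont : Continuous fun x : H => (inner ℂ u x : ℂ) := continuous_inner.comp
          (continuous_const.prodMk continuous_id)
        have heq : Set.EqOn (fun x : H => (inner ℂ u x : ℂ)) (fun _ => (0 : ℂ))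
            (ι '' {x : D | τ x = 0}) := by
          rintro _ ⟨p, hp, rfl⟩
          exact horth p hp
        have : (fun x : H => (inner ℂ u x : ℂ)) = fun _ => 0 :=
          Continuous.ext_on hd hcont continuous_const heq
        have h2 : (inner ℂ u u : ℂ) = 0 := congrFun this u
        exact inner_self_eq_zero.mp h2
      have hf0 : f = 0 := by
        have := hinv z hz f
        rw [← hu, hu0, map_zero] at this
        exact this.symm
      rw [← hf, hf0, map_zero]
    · rintro rfl
      exact ⟨⟨0, map_zero _⟩, 0, map_zero _⟩
  · -- trivial intersections ⟹ density
    intro hint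
    set M : Submodule ℂ H := (LinearMap.ker (τ : D →ₗ[ℂ] 𝔥)).map (ι : D →ₗ[ℂ] H) with hM
    have hMset : (M : Set H) = ι '' {x : D | τ x = 0} := by
      ext x
      simp [hM, LinearMap.mem_ker, Set.mem_image]
    rw [← hMset, Submodule.dense_iff_topologicalClosure_eq_top,
      Submodule.topologicalClosure_eq_top_iff, Submodule.eq_bot_iff]
    intro u hu
    -- `ι (res I u)` lies in the intersection for `z = I`
    have hBsurj : Function.Surjective (τ.comp (res ((starRingEnd ℂ) Complex.I))) :=
      hτ.comp (hres _ (hconj _ hI)).1.2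
    have hx0 : ι (res Complex.I u) ∈
        Set.range ((τ.comp (res ((starRingEnd ℂ) Complex.I))).adjoint) := by
      apply mem_range_adjoint_of_surjective _ hBsurj
      intro y hy
      have hp : res ((starRingEnd ℂ) Complex.I) y ∈ LinearMap.ker (τ : D →ₗ[ℂ] 𝔥) := hy
      have hmem : ι (res ((starRingEnd ℂ) Complex.I) y) ∈ M :=
        Submodule.mem_map_of_mem hp
      have h0 : (inner ℂ (ι (res ((starRingEnd ℂ) Complex.I) y)) u : ℂ) = 0 := hu _ hmem
      rw [hstar Complex.I hI u y, ← inner_conj_symm, h0, map_zero]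
    have : ι (res Complex.I u) ∈
        Set.range ((τ.comp (res ((starRingEnd ℂ) Complex.I))).adjoint) ∩ Set.range ι :=
      ⟨hx0, res Complex.I u, rfl⟩
    rw [hint Complex.I hI] at this
    have hres0 : res Complex.I u = 0 := hι (by simpa using this)
    have : res Complex.I u = res Complex.I 0 := by rw [hres0, map_zero]
    exact (hres Complex.I hI).1.1 this
end

section
/- Under the assumptions of the preceding statement, for every z ∈ ℂ \ ℝ the operator Γ_{Π,Θ}(z) = Θ + ΠΓ(z)Π : D(Θ) ⊆ 𝔥₀ → 𝔥₀ is injective with closed dense range, hence boundedly invertible; i.e. ℂ \ ℝ ⊆ Z_{Π,Θ} := {z ∈ ρ(A) : 0 ∈ ρ(Γ_{Π,Θ}(z))}. -/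
open ContinuousLinearMap

set_option maxHeartbeats 1000000


/-- Helper: a vector whose norm is bounded by `K * s` for all small positive `s` is zero. -/
lemma zero_of_norm_le_linear {V : Type*} [NormedAddCommGroup V] (x : V) (K δ : ℝ) (hδ : 0 < δ)
    (h : ∀ s : ℝ, 0 < s → s < δ → ‖x‖ ≤ K * s) : x = 0 := by
  rw [← norm_le_zero_iff]
  by_contra hx
  push_neg at hx
  have hK : 0 < K := by
    have h1 := h (δ/2) (by linarith) (by linarith)
    nlinarith
  have hs0 : 0 < min (δ/2) (‖x‖ / (2*K)) := lt_min (by linarith) (by positivity)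
  have h2 := h _ hs0 (lt_of_le_of_lt (min_le_left _ _) (by linarith))
  have h3 : K * min (δ/2) (‖x‖ / (2*K)) ≤ K * (‖x‖/(2*K)) :=
    mul_le_mul_of_nonneg_left (min_le_right _ _) hK.le
  have h4 : K * (‖x‖/(2*K)) = ‖x‖/2 := by field_simp
  linarith

/-- Helper: a vector orthogonal to a dense set is zero. -/
lemma eq_zero_of_inner_zero_dense {E : Type*} [NormedAddCommGroup E] [InnerProductSpace ℂ E]
    {s : Set E} (hs : Dense s) {w : E} (h : ∀ v ∈ s, (inner ℂ w v : ℂ) = 0) : w = 0 := by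
  have hc : Continuous fun v : E => (inner ℂ w v : ℂ) := continuous_const.inner continuous_id
  have heq : (fun v : E => (inner ℂ w v : ℂ)) = fun _ => (0:ℂ) :=
    Continuous.ext_on hs hc continuous_const h
  have hww : (inner ℂ w w : ℂ) = 0 := by
    have := congrFun heq w; simpa using this
  exact inner_self_eq_zero.mp hww


lemma aux_key {H 𝔥 : Type*} [NormedAddCommGroup H] [InnerProductSpace ℂ H] [CompleteSpace H]
    [NormedAddCommGroup 𝔥] [InnerProductSpace ℂ 𝔥] [CompleteSpace 𝔥]
    (S : ℂ → (H →L[ℂ] 𝔥)) (R : ℂ → (H →L[ℂ] H))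
    (hSres : ∀ u v : ℂ, u.im ≠ 0 → v.im ≠ 0 →
      S u = S v + ((starRingEnd ℂ) v - (starRingEnd ℂ) u) • ((S u).comp (R ((starRingEnd ℂ) v))))
    (hSadj : ∀ u v : ℂ, u.im ≠ 0 → v.im ≠ 0 →
      (S u).adjoint = (S v).adjoint + (v - u) • ((R v).comp (S u).adjoint))
    (hE : ∀ u v : ℂ, u.im ≠ 0 → v.im ≠ 0 →
      (S v).comp (S u).adjoint = (S u).comp (S v).adjoint)
    (u : ℂ) (hu : u.im ≠ 0) (η : 𝔥) :
    (S u) ((R ((starRingEnd ℂ) u)) ((S u).adjoint η)) = 0 ∧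
      (S u) ((R u) ((S u).adjoint η)) = 0 := by
  set D1 := (S u) ((R ((starRingEnd ℂ) u)) ((S u).adjoint η)) with hD1
  set D2 := (S u) ((R u) ((S u).adjoint η)) with hD2
  set K : ℝ := 2 * ‖S u‖^2 * (‖R u‖^2 + ‖R ((starRingEnd ℂ) u)‖^2) * ‖η‖ with hK
  have step : ∀ μ : ℂ, ‖μ‖ = 1 → ∀ s : ℝ, 0 < s → (u + (starRingEnd ℂ) μ * (s:ℂ)).im ≠ 0 →
      s * ‖R ((starRingEnd ℂ) u)‖ ≤ 1/2 →
      ‖(starRingEnd ℂ) μ • D2 - μ • D1‖ ≤ K * s := by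
    intro μ hμ s hs0 hwim hsmall
    set w := u + (starRingEnd ℂ) μ * (s:ℂ) with hwdef
    have hcw : (starRingEnd ℂ) w = (starRingEnd ℂ) u + μ * s := by
      simp [hwdef, map_add, map_mul, Complex.conj_conj, Complex.conj_ofReal]
    have hA := hSres w u hwim hu
    have hcoef : (starRingEnd ℂ) u - (starRingEnd ℂ) w = -(μ * s) := by rw [hcw]; ring
    rw [hcoef, neg_smul, ← sub_eq_add_neg] at hA
    have hB := hSadj w u hwim hu
    have hcoef2 : u - w = -((starRingEnd ℂ) μ * s) := by rw [hwdef]; ring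
    rw [hcoef2, neg_smul, ← sub_eq_add_neg] at hB
    have hC := hE w u hwim hu
    have hBp : ∀ p : 𝔥, (S w).adjoint p
        = (S u).adjoint p - ((starRingEnd ℂ) μ * s) • (R u) ((S w).adjoint p) := by
      intro p
      conv_lhs => rw [hB]
      simp only [ContinuousLinearMap.sub_apply, ContinuousLinearMap.smul_apply,
        ContinuousLinearMap.comp_apply]
    have hAp : ∀ q : H, S w q = S u q - (μ * s) • (S w) ((R ((starRingEnd ℂ) u)) q) := by
      intro q
      conv_lhs => rw [hA]
      simp only [ContinuousLinearMap.sub_apply, ContinuousLinearMap.smul_apply,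
        ContinuousLinearMap.comp_apply]
    have hCp : S u ((S w).adjoint η) = S w ((S u).adjoint η) := by
      have := ContinuousLinearMap.ext_iff.mp hC η
      simpa using this
    have hkey : (starRingEnd ℂ) μ • (S u) ((R u) ((S w).adjoint η))
        = μ • (S w) ((R ((starRingEnd ℂ) u)) ((S u).adjoint η)) := by
      have e1 : S u ((S w).adjoint η) = S u ((S u).adjoint η)
          - ((starRingEnd ℂ) μ * s) • (S u) ((R u) ((S w).adjoint η)) := by
        conv_lhs => rw [hBp η, map_sub, map_smul]
      have e2 : S w ((S u).adjoint η) = S u ((S u).adjoint η)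
          - (μ * s) • (S w) ((R ((starRingEnd ℂ) u)) ((S u).adjoint η)) := hAp _
      rw [e1, e2] at hCp
      have e3 := sub_right_inj.mp hCp
      have hs' : (s:ℂ) ≠ 0 := by exact_mod_cast hs0.ne'
      rw [mul_comm ((starRingEnd ℂ) μ) _, mul_comm μ _, mul_smul, mul_smul] at e3
      exact smul_right_injective 𝔥 hs' e3
    have d1 : (S u).adjoint η - (S w).adjoint η
        = ((starRingEnd ℂ) μ * s) • (R u) ((S w).adjoint η) := by
      conv_lhs => rw [hBp η]
      abel
    have t1 : (S u) ((R u) ((S u).adjoint η)) - (S u) ((R u) ((S w).adjoint η))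
        = ((starRingEnd ℂ) μ * s) • (S u) ((R u) ((R u) ((S w).adjoint η))) := by
      rw [← map_sub, ← map_sub, d1, map_smul, map_smul]
    have t2 : (S w) ((R ((starRingEnd ℂ) u)) ((S u).adjoint η))
          - (S u) ((R ((starRingEnd ℂ) u)) ((S u).adjoint η))
        = -((μ * s) • (S w) ((R ((starRingEnd ℂ) u)) ((R ((starRingEnd ℂ) u)) ((S u).adjoint η)))) := by
      rw [hAp ((R ((starRingEnd ℂ) u)) ((S u).adjoint η))]; abel
    have hdecomp : (starRingEnd ℂ) μ • D2 - μ • D1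
        = (starRingEnd ℂ) μ • (((starRingEnd ℂ) μ * s) • (S u) ((R u) ((R u) ((S w).adjoint η))))
          - μ • ((μ * s) • (S w) ((R ((starRingEnd ℂ) u)) ((R ((starRingEnd ℂ) u)) ((S u).adjoint η)))) := by
      have expand : (starRingEnd ℂ) μ • D2 - μ • D1
          = (starRingEnd ℂ) μ • ((S u) ((R u) ((S u).adjoint η)) - (S u) ((R u) ((S w).adjoint η)))
            + ((starRingEnd ℂ) μ • (S u) ((R u) ((S w).adjoint η))
              - μ • (S w) ((R ((starRingEnd ℂ) u)) ((S u).adjoint η)))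
            + μ • ((S w) ((R ((starRingEnd ℂ) u)) ((S u).adjoint η))
              - (S u) ((R ((starRingEnd ℂ) u)) ((S u).adjoint η))) := by
        rw [hD1, hD2]; module
      rw [expand, t1, t2, hkey, sub_self]
      module
    have hsC : ‖(μ * (s:ℂ))‖ = s := by
      rw [norm_mul, hμ, one_mul, Complex.norm_real, Real.norm_eq_abs, abs_of_pos hs0]
    have hsC' : ‖((starRingEnd ℂ) μ * (s:ℂ))‖ = s := by
      rw [norm_mul, RCLike.norm_conj, hμ, one_mul, Complex.norm_real, Real.norm_eq_abs,
        abs_of_pos hs0]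
    have hSwnorm : ‖S w‖ ≤ 2 * ‖S u‖ := by
      have hc0 : (0:ℝ) ≤ ‖S u‖ + s * (‖S w‖ * ‖R ((starRingEnd ℂ) u)‖) := by positivity
      have h1 : ‖S w‖ ≤ ‖S u‖ + s * (‖S w‖ * ‖R ((starRingEnd ℂ) u)‖) := by
        refine (S w).opNorm_le_bound hc0 fun q => ?_
        have b1 : ‖S u q‖ ≤ ‖S u‖ * ‖q‖ := le_opNorm _ _
        have b2 : ‖(S w) ((R ((starRingEnd ℂ) u)) q)‖ ≤ ‖S w‖ * (‖R ((starRingEnd ℂ) u)‖ * ‖q‖) := by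
          calc ‖(S w) ((R ((starRingEnd ℂ) u)) q)‖ ≤ ‖S w‖ * ‖(R ((starRingEnd ℂ) u)) q‖ :=
              le_opNorm _ _
          _ ≤ ‖S w‖ * (‖R ((starRingEnd ℂ) u)‖ * ‖q‖) := by gcongr; exact le_opNorm _ _
        calc ‖S w q‖ = ‖S u q - (μ * s) • (S w) ((R ((starRingEnd ℂ) u)) q)‖ := by rw [← hAp q]
        _ ≤ ‖S u q‖ + ‖(μ * (s:ℂ)) • (S w) ((R ((starRingEnd ℂ) u)) q)‖ := norm_sub_le _ _
        _ ≤ ‖S u q‖ + ‖(μ * (s:ℂ))‖ * ‖(S w) ((R ((starRingEnd ℂ) u)) q)‖ :=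
            add_le_add le_rfl (norm_smul_le _ _)
        _ ≤ (‖S u‖ + s * (‖S w‖ * ‖R ((starRingEnd ℂ) u)‖)) * ‖q‖ := by
            rw [hsC]
            nlinarith [norm_nonneg q, norm_nonneg (S w), norm_nonneg (R ((starRingEnd ℂ) u)), hs0]
      nlinarith [norm_nonneg (S w), norm_nonneg (R ((starRingEnd ℂ) u)), norm_nonneg (S u), hs0]
    have hSwadj : ‖(S w).adjoint‖ = ‖S w‖ := adjoint.norm_map (S w)
    have hSuadj : ‖(S u).adjoint‖ = ‖S u‖ := adjoint.norm_map (S u)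
    have hV1 : ‖(S u) ((R u) ((R u) ((S w).adjoint η)))‖
        ≤ ‖S u‖ * (‖R u‖ * (‖R u‖ * (2*‖S u‖*‖η‖))) := by
      have b0 : ‖(S w).adjoint η‖ ≤ 2*‖S u‖*‖η‖ := by
        calc ‖(S w).adjoint η‖ ≤ ‖(S w).adjoint‖ * ‖η‖ := le_opNorm _ _
        _ ≤ 2*‖S u‖*‖η‖ := by rw [hSwadj]; nlinarith [norm_nonneg η]
      calc ‖(S u) ((R u) ((R u) ((S w).adjoint η)))‖
          ≤ ‖S u‖ * ‖(R u) ((R u) ((S w).adjoint η))‖ := le_opNorm _ _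
        _ ≤ ‖S u‖ * (‖R u‖ * ‖(R u) ((S w).adjoint η)‖) := by
            gcongr; exact le_opNorm _ _
        _ ≤ ‖S u‖ * (‖R u‖ * (‖R u‖ * ‖(S w).adjoint η‖)) := by
            gcongr; exact le_opNorm _ _
        _ ≤ ‖S u‖ * (‖R u‖ * (‖R u‖ * (2*‖S u‖*‖η‖))) := by gcongr
    have hV2 : ‖(S w) ((R ((starRingEnd ℂ) u)) ((R ((starRingEnd ℂ) u)) ((S u).adjoint η)))‖
        ≤ (2*‖S u‖) * (‖R ((starRingEnd ℂ) u)‖ * (‖R ((starRingEnd ℂ) u)‖ * (‖S u‖*‖η‖))) := by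
      have b0 : ‖(S u).adjoint η‖ ≤ ‖S u‖*‖η‖ := by
        calc ‖(S u).adjoint η‖ ≤ ‖(S u).adjoint‖ * ‖η‖ := le_opNorm _ _
        _ = ‖S u‖*‖η‖ := by rw [hSuadj]
      calc ‖(S w) ((R ((starRingEnd ℂ) u)) ((R ((starRingEnd ℂ) u)) ((S u).adjoint η)))‖
          ≤ ‖S w‖ * ‖(R ((starRingEnd ℂ) u)) ((R ((starRingEnd ℂ) u)) ((S u).adjoint η))‖ :=
            le_opNorm _ _
        _ ≤ ‖S w‖ * (‖R ((starRingEnd ℂ) u)‖ * ‖(R ((starRingEnd ℂ) u)) ((S u).adjoint η)‖) := by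
            gcongr; exact le_opNorm _ _
        _ ≤ ‖S w‖ * (‖R ((starRingEnd ℂ) u)‖ * (‖R ((starRingEnd ℂ) u)‖ * ‖(S u).adjoint η‖)) := by
            gcongr; exact le_opNorm _ _
        _ ≤ (2*‖S u‖) * (‖R ((starRingEnd ℂ) u)‖ * (‖R ((starRingEnd ℂ) u)‖ * (‖S u‖*‖η‖))) := by
            gcongr
    calc ‖(starRingEnd ℂ) μ • D2 - μ • D1‖
        ≤ ‖(starRingEnd ℂ) μ • (((starRingEnd ℂ) μ * s) • (S u) ((R u) ((R u) ((S w).adjoint η))))‖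
          + ‖μ • ((μ * s) • (S w) ((R ((starRingEnd ℂ) u)) ((R ((starRingEnd ℂ) u)) ((S u).adjoint η))))‖ := by
          rw [hdecomp]; exact norm_sub_le _ _
      _ = s * ‖(S u) ((R u) ((R u) ((S w).adjoint η)))‖
          + s * ‖(S w) ((R ((starRingEnd ℂ) u)) ((R ((starRingEnd ℂ) u)) ((S u).adjoint η)))‖ := by
          rw [norm_smul, norm_smul, norm_smul, norm_smul, RCLike.norm_conj, hμ, hsC, hsC']
          ring
      _ ≤ s * (‖S u‖ * (‖R u‖ * (‖R u‖ * (2*‖S u‖*‖η‖))))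
          + s * ((2*‖S u‖) * (‖R ((starRingEnd ℂ) u)‖ * (‖R ((starRingEnd ℂ) u)‖ * (‖S u‖*‖η‖)))) := by
          gcongr
      _ = K * s := by rw [hK]; ring
  have hδ0 : (0:ℝ) < min ((2 * (‖R ((starRingEnd ℂ) u)‖ + 1))⁻¹) |u.im| := by
    apply lt_min
    · positivity
    · exact abs_pos.mpr hu
  have hsmall : ∀ s : ℝ, 0 < s → s < min ((2 * (‖R ((starRingEnd ℂ) u)‖ + 1))⁻¹) |u.im| →
      s * ‖R ((starRingEnd ℂ) u)‖ ≤ 1/2 := by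
    intro s hs0 hs1
    have h1 : s < (2 * (‖R ((starRingEnd ℂ) u)‖ + 1))⁻¹ := lt_of_lt_of_le hs1 (min_le_left _ _)
    have h2 : (0:ℝ) < 2 * (‖R ((starRingEnd ℂ) u)‖ + 1) := by positivity
    rw [inv_eq_one_div, lt_div_iff₀ h2] at h1
    nlinarith [norm_nonneg (R ((starRingEnd ℂ) u))]
  have h1 : D2 = D1 := by
    have hzero := zero_of_norm_le_linear (D2 - D1) K _ hδ0 ?_
    · exact sub_eq_zero.mp hzero
    intro s hs0 hs1
    have him : (u + (starRingEnd ℂ) 1 * (s:ℂ)).im ≠ 0 := by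
      simpa using hu
    have hst := step 1 (by simp) s hs0 him (hsmall s hs0 hs1)
    simpa using hst
  have h2 : D2 + D1 = 0 := by
    apply zero_of_norm_le_linear (D2 + D1) K _ hδ0
    intro s hs0 hs1
    have hs2 : s < |u.im| := lt_of_lt_of_le hs1 (min_le_right _ _)
    have hirw : (u + (starRingEnd ℂ) Complex.I * (s:ℂ)).im = u.im - s := by
      simp [Complex.conj_I]; ring
    have him : (u + (starRingEnd ℂ) Complex.I * (s:ℂ)).im ≠ 0 := by
      rw [hirw]
      intro hcon
      have hse : s = u.im := by linarith
      rcases lt_or_gt_of_ne hu with h | h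
      · linarith
      · rw [abs_of_pos h] at hs2; linarith
    have hst := step Complex.I (by simp) s hs0 him (hsmall s hs0 hs1)
    have hrw : (starRingEnd ℂ) Complex.I • D2 - Complex.I • D1
        = (-Complex.I) • (D2 + D1) := by
      rw [Complex.conj_I]; module
    rw [hrw, norm_smul] at hst
    simpa using hst
  have hD1z : D1 = 0 := by
    have hh : (2:ℂ) • D1 = 0 := by
      rw [two_smul]
      calc D1 + D1 = D2 + D1 := by rw [h1]
      _ = 0 := h2
    rcases smul_eq_zero.mp hh with h | h
    · exact absurd h two_ne_zero
    · exact h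
  exact ⟨hD1z, by rw [h1, hD1z]⟩



/-- Formula for the imaginary part of `⟪η, Γ u η⟫`. -/
lemma aux_im {H 𝔥 : Type*} [NormedAddCommGroup H] [InnerProductSpace ℂ H] [CompleteSpace H]
    [NormedAddCommGroup 𝔥] [InnerProductSpace ℂ 𝔥] [CompleteSpace 𝔥]
    (S : ℂ → (H →L[ℂ] 𝔥)) (R : ℂ → (H →L[ℂ] H)) (Γ : ℂ → (𝔥 →L[ℂ] 𝔥))
    (hSadj : ∀ u v : ℂ, u.im ≠ 0 → v.im ≠ 0 →
      (S u).adjoint = (S v).adjoint + (v - u) • ((R v).comp (S u).adjoint))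
    (hΓ' : ∀ u v : ℂ, u.im ≠ 0 → v.im ≠ 0 →
      Γ u - Γ v = (u - v) • ((S v).comp ((S u).adjoint)))
    (hΓadj : ∀ u : ℂ, u.im ≠ 0 → (Γ u).adjoint = Γ ((starRingEnd ℂ) u))
    (hD1 : ∀ u : ℂ, u.im ≠ 0 → ∀ η : 𝔥,
      (S u) ((R ((starRingEnd ℂ) u)) ((S u).adjoint η)) = 0)
    (u : ℂ) (hu : u.im ≠ 0) (η : 𝔥) :
    (inner ℂ η (Γ u η) : ℂ).im = u.im * ‖(S u).adjoint η‖^2 := by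
  have hcu : ((starRingEnd ℂ) u).im ≠ 0 := by
    simpa using neg_ne_zero.mpr hu
  set a := (S u).adjoint η with ha
  set b := (S ((starRingEnd ℂ) u)).adjoint η with hb
  -- b = a + (u - conj u) • R (conj u) a
  have hab : a = b + ((starRingEnd ℂ) u - u) • (R ((starRingEnd ℂ) u)) a := by
    have h := hSadj u ((starRingEnd ℂ) u) hu hcu
    have hp := ContinuousLinearMap.ext_iff.mp h η
    simpa only [ContinuousLinearMap.add_apply, ContinuousLinearMap.smul_apply,
      ContinuousLinearMap.comp_apply] using hp
  -- ⟪b, a⟫ = ‖a‖²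
  have hba : (inner ℂ b a : ℂ) = (‖a‖^2 : ℝ) := by
    have hzero : (inner ℂ a ((R ((starRingEnd ℂ) u)) a) : ℂ) = 0 := by
      have h0 : (inner ℂ η ((S u) ((R ((starRingEnd ℂ) u)) a)) : ℂ) = 0 := by
        rw [hD1 u hu η]; exact inner_zero_right _
      calc (inner ℂ a ((R ((starRingEnd ℂ) u)) a) : ℂ)
          = inner ℂ η ((S u) ((R ((starRingEnd ℂ) u)) a)) := by
            rw [ha]; exact ContinuousLinearMap.adjoint_inner_left _ _ _
        _ = 0 := h0
    have hb' : b = a - ((starRingEnd ℂ) u - u) • (R ((starRingEnd ℂ) u)) a :=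
      eq_sub_iff_add_eq.mpr hab.symm
    rw [hb', inner_sub_left, inner_smul_left]
    rw [show (inner ℂ ((R ((starRingEnd ℂ) u)) a) a : ℂ)
        = (starRingEnd ℂ) (inner ℂ a ((R ((starRingEnd ℂ) u)) a) : ℂ) from (inner_conj_symm _ _).symm]
    rw [hzero]
    simp only [map_zero, mul_zero, sub_zero]
    rw [inner_self_eq_norm_sq_to_K]
    norm_cast
  -- difference formula
  have hdiff : (inner ℂ η (Γ u η) : ℂ) - (inner ℂ η (Γ ((starRingEnd ℂ) u) η) : ℂ)
      = (u - (starRingEnd ℂ) u) * (‖a‖^2 : ℝ) := by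
    have h := hΓ' u ((starRingEnd ℂ) u) hu hcu
    have hp := ContinuousLinearMap.ext_iff.mp h η
    have hp' : (Γ u) η - (Γ ((starRingEnd ℂ) u)) η
        = (u - (starRingEnd ℂ) u) • (S ((starRingEnd ℂ) u)) a := by
      simpa only [ContinuousLinearMap.sub_apply, ContinuousLinearMap.smul_apply,
        ContinuousLinearMap.comp_apply] using hp
    calc (inner ℂ η (Γ u η) : ℂ) - (inner ℂ η (Γ ((starRingEnd ℂ) u) η) : ℂ)
        = inner ℂ η ((Γ u) η - (Γ ((starRingEnd ℂ) u)) η) := (inner_sub_right _ _ _).symm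
      _ = (u - (starRingEnd ℂ) u) * (inner ℂ η ((S ((starRingEnd ℂ) u)) a) : ℂ) := by
          rw [hp', inner_smul_right]
      _ = (u - (starRingEnd ℂ) u) * (inner ℂ b a : ℂ) := by
          rw [hb]
          congr 1
          exact (ContinuousLinearMap.adjoint_inner_left _ _ _).symm
      _ = (u - (starRingEnd ℂ) u) * (‖a‖^2 : ℝ) := by rw [hba]
  -- conjugation
  have hconj : (inner ℂ η (Γ ((starRingEnd ℂ) u) η) : ℂ)
      = (starRingEnd ℂ) (inner ℂ η (Γ u η) : ℂ) := by
    rw [← hΓadj u hu]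
    rw [ContinuousLinearMap.adjoint_inner_right]
    exact (inner_conj_symm _ _).symm
  rw [hconj] at hdiff
  have him := congrArg Complex.im hdiff
  simp only [Complex.sub_im, Complex.conj_im, Complex.mul_im, Complex.sub_re, Complex.conj_re,
    Complex.ofReal_im, Complex.ofReal_re, sub_self, zero_mul, mul_zero, add_zero, sub_neg_eq_add] at him
  linarith



/-- under the assumptions of Statement 4 (with moreover `τ : H_A → 𝔥` bounded
surjective with dense kernel and `G(z) = (τ (-A+z̄)⁻¹)*`), for every nonreal `z` the operator
`Γ_{Π,Θ}(z) = Θ + ΠΓ(z)Π : D(Θ) ⊆ 𝔥₀ → 𝔥₀` is bijective with bounded inverse, i.e.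
`ℂ \ ℝ ⊆ Z_{Π,Θ}`. -/
theorem stmt5 {H D 𝔥 𝔥₀ : Type*}
    [NormedAddCommGroup H] [InnerProductSpace ℂ H] [CompleteSpace H]
    [NormedAddCommGroup D] [InnerProductSpace ℂ D] [CompleteSpace D]
    [NormedAddCommGroup 𝔥] [InnerProductSpace ℂ 𝔥] [CompleteSpace 𝔥]
    [NormedAddCommGroup 𝔥₀] [InnerProductSpace ℂ 𝔥₀] [CompleteSpace 𝔥₀]
    (ι : D →L[ℂ] H) (hι : Function.Injective ι) (hdense : DenseRange ι)
    (A : D →L[ℂ] H)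
    (hgraph : ∀ x y : D, (inner ℂ x y : ℂ) = inner ℂ (A x) (A y) + inner ℂ (ι x) (ι y))
    (hsym : ∀ x y : D, (inner ℂ (A x) (ι y) : ℂ) = inner ℂ (ι x) (A y))
    (ρA : Set ℂ) (hconj : ∀ z ∈ ρA, (starRingEnd ℂ) z ∈ ρA)
    (hρ : ∀ z : ℂ, z.im ≠ 0 → z ∈ ρA)
    (res : ℂ → (H →L[ℂ] D))
    (hres : ∀ z ∈ ρA, Function.Bijective (res z) ∧
      ∀ x : H, z • ι (res z x) - A (res z x) = x)
    (τ : D →L[ℂ] 𝔥) (hτ : Function.Surjective τ)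
    (hker : Dense (ι '' {x : D | τ x = 0}))
    (Γ : ℂ → (𝔥 →L[ℂ] 𝔥))
    (hΓ : ∀ z w : ℂ, z.im ≠ 0 → w.im ≠ 0 →
      Γ z - Γ w = (z - w) •
        (((τ.comp (res ((starRingEnd ℂ) w))).adjoint).adjoint.comp
          ((τ.comp (res ((starRingEnd ℂ) z))).adjoint)))
    (hΓadj : ∀ z : ℂ, z.im ≠ 0 → (Γ z).adjoint = Γ ((starRingEnd ℂ) z))
    (J : 𝔥₀ →L[ℂ] 𝔥) (hJ : ∀ x : 𝔥₀, ‖J x‖ = ‖x‖)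
    (Θ : 𝔥₀ →ₗ.[ℂ] 𝔥₀) (hΘ : IsSelfAdjoint Θ)
    (z : ℂ) (hz : z.im ≠ 0) :
    Function.Bijective
        (fun ζ : Θ.domain => Θ ζ + J.adjoint (Γ z (J (ζ : 𝔥₀)))) ∧
      ∃ C > (0:ℝ), ∀ ζ : Θ.domain,
        C * ‖(ζ : 𝔥₀)‖ ≤ ‖Θ ζ + J.adjoint (Γ z (J (ζ : 𝔥₀)))‖ := by
  -- basic facts about conjugates and resolvents
  have hconj' : ∀ u : ℂ, u.im ≠ 0 → ((starRingEnd ℂ) u).im ≠ 0 := by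
    intro u hu
    simpa using neg_ne_zero.mpr hu
  have hsol : ∀ u : ℂ, u.im ≠ 0 → ∀ x : H, u • ι (res u x) - A (res u x) = x :=
    fun u hu => (hres u (hρ u hu)).2
  have hbij : ∀ u : ℂ, u.im ≠ 0 → Function.Bijective (res u) :=
    fun u hu => (hres u (hρ u hu)).1
  have hli : ∀ u : ℂ, u.im ≠ 0 → ∀ v : D, res u (u • ι v - A v) = v := by
    intro u hu v
    obtain ⟨x, rfl⟩ := (hbij u hu).2 v
    rw [hsol u hu x]
  -- the resolvent identity
  have hresid : ∀ u v : ℂ, u.im ≠ 0 → v.im ≠ 0 → ∀ x : H,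
      res u x = res v x + (v - u) • res u (ι (res v x)) := by
    intro u v hu hv x
    have expand : u • ι (res v x + (v - u) • res u (ι (res v x)))
          - A (res v x + (v - u) • res u (ι (res v x)))
        = (u • ι (res v x) - A (res v x))
          + (v - u) • (u • ι (res u (ι (res v x))) - A (res u (ι (res v x)))) := by
      simp only [map_add, map_smul]
      module
    have h2 := hsol u hu (ι (res v x))
    have h3 : u • ι (res v x) - A (res v x)
        = (v • ι (res v x) - A (res v x)) + (u - v) • ι (res v x) := by
      module
    have key : u • ι (res v x + (v - u) • res u (ι (res v x)))
          - A (res v x + (v - u) • res u (ι (res v x))) = x := by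
      rw [expand, h2, h3, hsol v hv x]
      module
    calc res u x = res u (u • ι (res v x + (v - u) • res u (ι (res v x)))
          - A (res v x + (v - u) • res u (ι (res v x)))) := by rw [key]
      _ = res v x + (v - u) • res u (ι (res v x)) := hli u hu _
  -- adjoint of R u = ι ∘ res u
  have hRadj : ∀ u : ℂ, u.im ≠ 0 →
      (ι.comp (res u)).adjoint = ι.comp (res ((starRingEnd ℂ) u)) := by
    intro u hu
    refine ((ContinuousLinearMap.eq_adjoint_iff (ι.comp (res ((starRingEnd ℂ) u)))
      (ι.comp (res u))).mpr ?_).symm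
    intro x y
    simp only [ContinuousLinearMap.comp_apply]
    have hy := hsol u hu y
    have hx := hsol ((starRingEnd ℂ) u) (hconj' u hu) x
    calc (inner ℂ (ι (res ((starRingEnd ℂ) u) x)) y : ℂ)
        = inner ℂ (ι (res ((starRingEnd ℂ) u) x)) (u • ι (res u y) - A (res u y)) := by rw [hy]
      _ = inner ℂ ((starRingEnd ℂ) u • ι (res ((starRingEnd ℂ) u) x)
            - A (res ((starRingEnd ℂ) u) x)) (ι (res u y)) := by
          simp only [inner_sub_right, inner_smul_right, inner_sub_left, inner_smul_left,
            Complex.conj_conj, hsym]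
      _ = inner ℂ x (ι (res u y)) := by rw [hx]
  -- resolvent identity for S u = τ ∘ res (conj u)
  have hSres : ∀ u v : ℂ, u.im ≠ 0 → v.im ≠ 0 →
      τ.comp (res ((starRingEnd ℂ) u)) = τ.comp (res ((starRingEnd ℂ) v))
        + ((starRingEnd ℂ) v - (starRingEnd ℂ) u) •
          ((τ.comp (res ((starRingEnd ℂ) u))).comp (ι.comp (res ((starRingEnd ℂ) v)))) := by
    intro u v hu hv
    ext x
    simp only [ContinuousLinearMap.comp_apply, ContinuousLinearMap.add_apply,
      ContinuousLinearMap.smul_apply]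
    rw [hresid ((starRingEnd ℂ) u) ((starRingEnd ℂ) v) (hconj' u hu) (hconj' v hv) x]
    simp only [map_add, map_smul]
  -- adjoint version of the resolvent identity
  have hSadj : ∀ u v : ℂ, u.im ≠ 0 → v.im ≠ 0 →
      (τ.comp (res ((starRingEnd ℂ) u))).adjoint = (τ.comp (res ((starRingEnd ℂ) v))).adjoint
        + (v - u) • ((ι.comp (res v)).comp ((τ.comp (res ((starRingEnd ℂ) u))).adjoint)) := by
    intro u v hu hv
    conv_lhs => rw [hSres u v hu hv]
    rw [map_add, map_smulₛₗ]
    rw [show ((τ.comp (res ((starRingEnd ℂ) u))).comp (ι.comp (res ((starRingEnd ℂ) v)))).adjoint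
      = ((ι.comp (res ((starRingEnd ℂ) v))).adjoint).comp
        ((τ.comp (res ((starRingEnd ℂ) u))).adjoint) from ContinuousLinearMap.adjoint_comp _ _]
    rw [hRadj ((starRingEnd ℂ) v) (hconj' v hv)]
    simp only [Complex.conj_conj, map_sub]
  -- the symmetry relation from hΓ
  have hΓ' : ∀ u v : ℂ, u.im ≠ 0 → v.im ≠ 0 →
      Γ u - Γ v = (u - v) • ((τ.comp (res ((starRingEnd ℂ) v))).comp
        ((τ.comp (res ((starRingEnd ℂ) u))).adjoint)) := by
    intro u v hu hv
    have h := hΓ u v hu hv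
    rwa [ContinuousLinearMap.adjoint_adjoint] at h
  have hE : ∀ u v : ℂ, u.im ≠ 0 → v.im ≠ 0 →
      (τ.comp (res ((starRingEnd ℂ) v))).comp ((τ.comp (res ((starRingEnd ℂ) u))).adjoint)
        = (τ.comp (res ((starRingEnd ℂ) u))).comp ((τ.comp (res ((starRingEnd ℂ) v))).adjoint) := by
    intro u v hu hv
    by_cases huv : u = v
    · subst huv; rfl
    have h1 := hΓ' u v hu hv
    have h2 := hΓ' v u hv hu
    have h3 : (u - v) • ((τ.comp (res ((starRingEnd ℂ) v))).comp
          ((τ.comp (res ((starRingEnd ℂ) u))).adjoint))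
        = (u - v) • ((τ.comp (res ((starRingEnd ℂ) u))).comp
          ((τ.comp (res ((starRingEnd ℂ) v))).adjoint)) := by
      rw [← h1]
      have : Γ u - Γ v = -(Γ v - Γ u) := by abel
      rw [this, h2, ← neg_smul]
      congr 1
      ring
    have huv' : u - v ≠ 0 := sub_ne_zero.mpr huv
    have := congrArg (fun T => (u - v)⁻¹ • T) h3
    simpa [smul_smul, inv_mul_cancel₀ huv'] using this
  -- key vanishing facts
  have hD := aux_key (fun u => τ.comp (res ((starRingEnd ℂ) u))) (fun u => ι.comp (res u))
    hSres hSadj hE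
  have hD1 : ∀ u : ℂ, u.im ≠ 0 → ∀ η : 𝔥,
      (τ.comp (res ((starRingEnd ℂ) u))) ((ι.comp (res ((starRingEnd ℂ) u)))
        (((τ.comp (res ((starRingEnd ℂ) u))).adjoint) η)) = 0 :=
    fun u hu η => (hD u hu η).1
  -- imaginary part formula
  have himI : ∀ u : ℂ, u.im ≠ 0 → ∀ η : 𝔥,
      (inner ℂ η (Γ u η) : ℂ).im = u.im * ‖(τ.comp (res ((starRingEnd ℂ) u))).adjoint η‖^2 :=
    aux_im (fun u => τ.comp (res ((starRingEnd ℂ) u))) (fun u => ι.comp (res u)) Γ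
      hSadj hΓ' hΓadj hD1
  -- lower bound for the adjoint
  have hlow : ∀ u : ℂ, u.im ≠ 0 → ∃ γ > (0:ℝ), ∀ η : 𝔥,
      γ * ‖η‖ ≤ ‖(τ.comp (res ((starRingEnd ℂ) u))).adjoint η‖ := by
    intro u hu
    have hsurj : Function.Surjective ⇑(τ.comp (res ((starRingEnd ℂ) u))) := by
      rw [ContinuousLinearMap.coe_comp']
      exact hτ.comp (hbij ((starRingEnd ℂ) u) (hconj' u hu)).2
    obtain ⟨C, hC0, hC⟩ := (τ.comp (res ((starRingEnd ℂ) u))).exists_preimage_norm_le hsurj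
    refine ⟨1/C, by positivity, ?_⟩
    intro η
    obtain ⟨x, hx, hxn⟩ := hC η
    have key : (‖η‖:ℝ)^2 ≤ ‖(τ.comp (res ((starRingEnd ℂ) u))).adjoint η‖ * (C * ‖η‖) := by
      have h1 : (inner ℂ η η : ℂ) = inner ℂ ((τ.comp (res ((starRingEnd ℂ) u))).adjoint η) x := by
        rw [ContinuousLinearMap.adjoint_inner_left, hx]
      calc (‖η‖:ℝ)^2 = ‖(inner ℂ η η : ℂ)‖ := by
            rw [inner_self_eq_norm_sq_to_K]
            rw [norm_pow]
            norm_num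
        _ = ‖(inner ℂ ((τ.comp (res ((starRingEnd ℂ) u))).adjoint η) x : ℂ)‖ := by rw [h1]
        _ ≤ ‖(τ.comp (res ((starRingEnd ℂ) u))).adjoint η‖ * ‖x‖ := norm_inner_le_norm _ _
        _ ≤ ‖(τ.comp (res ((starRingEnd ℂ) u))).adjoint η‖ * (C * ‖η‖) := by
            gcongr
    rcases eq_or_lt_of_le (norm_nonneg η) with h0 | h0
    · rw [← h0]
      simp
    have h2 : ‖η‖ ≤ ‖(τ.comp (res ((starRingEnd ℂ) u))).adjoint η‖ * C := by
      nlinarith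
    calc 1/C * ‖η‖ ≤ 1/C * (‖(τ.comp (res ((starRingEnd ℂ) u))).adjoint η‖ * C) := by
          have : (0:ℝ) ≤ 1/C := by positivity
          nlinarith
      _ = ‖(τ.comp (res ((starRingEnd ℂ) u))).adjoint η‖ := by field_simp
  -- facts about Θ
  have hΘeq : Θ.adjoint = Θ := LinearPMap.isSelfAdjoint_def.mp hΘ
  have hdd : Dense (Θ.domain : Set 𝔥₀) := hΘ.dense_domain
  have hsymΘ : ∀ ξ ψ : Θ.domain, (inner ℂ (Θ ξ) (ψ : 𝔥₀) : ℂ) = inner ℂ (ξ : 𝔥₀) (Θ ψ) := by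
    have h := LinearPMap.adjoint_isFormalAdjoint hdd (T := Θ)
    rw [hΘeq] at h
    exact h
  have hperp : ∀ w : 𝔥₀, (∀ ξ : Θ.domain, (inner ℂ w (ξ : 𝔥₀) : ℂ) = 0) → w = 0 := by
    intro w hw
    refine eq_zero_of_inner_zero_dense hdd ?_
    intro v hv
    exact hw ⟨v, hv⟩
  -- coercivity estimate
  have hcoer : ∀ u : ℂ, u.im ≠ 0 → ∃ C > (0:ℝ), ∀ ζ : Θ.domain,
      C * ‖(ζ : 𝔥₀)‖ ≤ ‖Θ ζ + J.adjoint (Γ u (J (ζ : 𝔥₀)))‖ := by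
    intro u hu
    obtain ⟨γ, hγ0, hγ⟩ := hlow u hu
    refine ⟨|u.im| * γ^2, by positivity, ?_⟩
    intro ζ
    set x : 𝔥₀ := (ζ : 𝔥₀) with hx
    set Tv : 𝔥₀ := Θ ζ + J.adjoint (Γ u (J x)) with hTv
    have himx : (inner ℂ x Tv : ℂ).im = u.im * ‖(τ.comp (res ((starRingEnd ℂ) u))).adjoint (J x)‖^2 := by
      rw [hTv, inner_add_right]
      have h1 : (inner ℂ x (Θ ζ) : ℂ).im = 0 := by
        have hc : (starRingEnd ℂ) (inner ℂ x (Θ ζ) : ℂ) = (inner ℂ x (Θ ζ) : ℂ) := by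
          rw [inner_conj_symm]
          exact hsymΘ ζ ζ
        rw [Complex.conj_eq_iff_im] at hc
        exact hc
      have h2 : (inner ℂ x (J.adjoint (Γ u (J x))) : ℂ) = inner ℂ (J x) (Γ u (J x)) :=
        ContinuousLinearMap.adjoint_inner_right _ _ _
      rw [Complex.add_im, h1, h2, zero_add]
      exact himI u hu (J x)
    have hJx : ‖J x‖ = ‖x‖ := hJ x
    have hlb : |u.im| * γ^2 * ‖x‖^2 ≤ |(inner ℂ x Tv : ℂ).im| := by
      rw [himx, abs_mul]
      have h3 : γ * ‖J x‖ ≤ ‖(τ.comp (res ((starRingEnd ℂ) u))).adjoint (J x)‖ := hγ (J x)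
      have h4 : γ^2 * ‖x‖^2 ≤ ‖(τ.comp (res ((starRingEnd ℂ) u))).adjoint (J x)‖^2 := by
        rw [← hJx]
        nlinarith [h3, mul_nonneg hγ0.le (norm_nonneg (J x)),
          norm_nonneg ((τ.comp (res ((starRingEnd ℂ) u))).adjoint (J x))]
      have h5 : |(‖(τ.comp (res ((starRingEnd ℂ) u))).adjoint (J x)‖^2 : ℝ)|
          = ‖(τ.comp (res ((starRingEnd ℂ) u))).adjoint (J x)‖^2 := abs_of_nonneg (by positivity)
      rw [h5]
      nlinarith [abs_nonneg u.im]
    have hub : |(inner ℂ x Tv : ℂ).im| ≤ ‖x‖ * ‖Tv‖ := by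
      calc |(inner ℂ x Tv : ℂ).im| ≤ ‖(inner ℂ x Tv : ℂ)‖ := Complex.abs_im_le_norm _
        _ = ‖(inner ℂ x Tv : ℂ)‖ := rfl
        _ ≤ ‖x‖ * ‖Tv‖ := norm_inner_le_norm _ _
    rcases eq_or_lt_of_le (norm_nonneg x) with h0 | h0
    · rw [← h0]
      simp
    have : |u.im| * γ^2 * ‖x‖^2 ≤ ‖x‖ * ‖Tv‖ := le_trans hlb hub
    nlinarith
  -- the linear map T
  set B : 𝔥₀ →L[ℂ] 𝔥₀ := (J.adjoint).comp ((Γ z).comp J) with hB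
  have hBapp : ∀ v : 𝔥₀, B v = J.adjoint (Γ z (J v)) := fun v => rfl
  set Tlin : Θ.domain →ₗ[ℂ] 𝔥₀ :=
    { toFun := fun ζ => Θ ζ + B (ζ : 𝔥₀)
      map_add' := by
        intro a b
        simp only [Θ.map_add, Submodule.coe_add, map_add]
        abel
      map_smul' := by
        intro c a
        simp only [Θ.map_smul, Submodule.coe_smul, map_smul, RingHom.id_apply, smul_add] } with hTlin
  have hTapp : ∀ ζ : Θ.domain, Tlin ζ = Θ ζ + J.adjoint (Γ z (J (ζ : 𝔥₀))) := fun ζ => rfl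
  obtain ⟨C, hC0, hC⟩ := hcoer z hz
  -- injectivity
  have hinj : Function.Injective (fun ζ : Θ.domain => Θ ζ + J.adjoint (Γ z (J (ζ : 𝔥₀)))) := by
    intro a b hab
    have hTab : Tlin a = Tlin b := hab
    have hsub : Tlin (a - b) = 0 := by rw [map_sub, hTab, sub_self]
    have := hC (a - b)
    rw [← hTapp (a - b), hsub] at this
    simp only [norm_zero] at this
    have h0 : ‖((a - b : Θ.domain) : 𝔥₀)‖ = 0 := by nlinarith [norm_nonneg ((a - b : Θ.domain) : 𝔥₀)]
    have : ((a - b : Θ.domain) : 𝔥₀) = 0 := norm_eq_zero.mp h0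
    rw [Submodule.coe_sub, sub_eq_zero] at this
    exact Subtype.ext this
  -- range is closed
  have hclosed : IsClosed ((LinearMap.range Tlin : Submodule ℂ 𝔥₀) : Set 𝔥₀) := by
    apply IsSeqClosed.isClosed
    intro f y hf hfy
    have hf' : ∀ n, ∃ ζ : Θ.domain, Tlin ζ = f n := fun n => LinearMap.mem_range.mp (hf n)
    choose ζs hζs using hf'
    have hcauchy : CauchySeq fun n => ((ζs n : 𝔥₀)) := by
      rw [Metric.cauchySeq_iff]
      intro ε hε
      have hfc : CauchySeq f := hfy.cauchySeq
      rw [Metric.cauchySeq_iff] at hfc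
      obtain ⟨N, hN⟩ := hfc (C * ε) (by positivity)
      refine ⟨N, fun m hm n hn => ?_⟩
      have hd := hN m hm n hn
      rw [dist_eq_norm] at hd ⊢
      have hle := hC (ζs m - ζs n)
      rw [← hTapp (ζs m - ζs n), map_sub, hζs, hζs] at hle
      rw [Submodule.coe_sub] at hle
      nlinarith [norm_nonneg ((ζs m : 𝔥₀) - (ζs n : 𝔥₀))]
    obtain ⟨x, hx⟩ := cauchySeq_tendsto_of_complete hcauchy
    have hBx : Filter.Tendsto (fun n => B ((ζs n : 𝔥₀))) Filter.atTop (nhds (B x)) :=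
      (B.continuous.tendsto x).comp hx
    have hΘt : Filter.Tendsto (fun n => Θ (ζs n)) Filter.atTop (nhds (y - B x)) := by
      have heq : (fun n => Θ (ζs n)) = fun n => f n - B ((ζs n : 𝔥₀)) := by
        funext n
        rw [← hζs n]
        show Θ (ζs n) = (Θ (ζs n) + B ((ζs n : 𝔥₀))) - B ((ζs n : 𝔥₀))
        abel
      rw [heq]
      exact hfy.sub hBx
    have hmm : ∀ ξ : Θ.domain, (inner ℂ (y - B x) (ξ : 𝔥₀) : ℂ) = inner ℂ x (Θ ξ) := by
      intro ξ
      have h1 : Filter.Tendsto (fun n => (inner ℂ (Θ (ζs n)) (ξ : 𝔥₀) : ℂ)) Filter.atTop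
          (nhds (inner ℂ (y - B x) (ξ : 𝔥₀))) := hΘt.inner tendsto_const_nhds
      have h2 : Filter.Tendsto (fun n => (inner ℂ ((ζs n : 𝔥₀)) (Θ ξ) : ℂ)) Filter.atTop
          (nhds (inner ℂ x (Θ ξ))) := hx.inner tendsto_const_nhds
      have heq : (fun n => (inner ℂ (Θ (ζs n)) (ξ : 𝔥₀) : ℂ))
          = fun n => (inner ℂ ((ζs n : 𝔥₀)) (Θ ξ) : ℂ) := funext fun n => hsymΘ (ζs n) ξ
      rw [heq] at h1
      exact tendsto_nhds_unique h1 h2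
    have hxdom : x ∈ Θ.domain := by
      have hmem : x ∈ Θ.adjoint.domain :=
        LinearPMap.mem_adjoint_domain_of_exists x ⟨y - B x, hmm⟩
      rwa [hΘeq] at hmem
    have hval : Θ ⟨x, hxdom⟩ = y - B x := by
      have hz0 : ∀ ξ : Θ.domain, (inner ℂ (Θ ⟨x, hxdom⟩ - (y - B x)) (ξ : 𝔥₀) : ℂ) = 0 := by
        intro ξ
        rw [inner_sub_left, hsymΘ ⟨x, hxdom⟩ ξ, hmm ξ]
        simp
      have := hperp _ hz0
      exact sub_eq_zero.mp this
    refine ⟨⟨x, hxdom⟩, ?_⟩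
    show Θ ⟨x, hxdom⟩ + B x = y
    rw [hval]
    abel
  -- range is dense
  have hbot : (LinearMap.range Tlin : Submodule ℂ 𝔥₀)ᗮ = ⊥ := by
    rw [Submodule.eq_bot_iff]
    intro η hη
    have horto : ∀ ζ : Θ.domain, (inner ℂ (Tlin ζ) η : ℂ) = 0 := by
      intro ζ
      exact (Submodule.mem_orthogonal _ η).mp hη _ (LinearMap.mem_range_self Tlin ζ)
    have h2 : ∀ ζ : Θ.domain, (inner ℂ (-(B.adjoint η)) ((ζ : 𝔥₀)) : ℂ) = inner ℂ η (Θ ζ) := by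
      intro ζ
      have h0 : (inner ℂ η (Θ ζ + B (ζ : 𝔥₀)) : ℂ) = 0 := by
        have h00 : (inner ℂ (Θ ζ + B (ζ : 𝔥₀)) η : ℂ) = 0 := horto ζ
        rw [← inner_conj_symm, h00]
        simp
      rw [inner_add_right] at h0
      have h3 : (inner ℂ η (B (ζ : 𝔥₀)) : ℂ) = inner ℂ (B.adjoint η) ((ζ : 𝔥₀)) :=
        (ContinuousLinearMap.adjoint_inner_left _ _ _).symm
      rw [inner_neg_left]
      rw [← h3]
      linear_combination -h0
    have hηdom : η ∈ Θ.domain := by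
      have hmem : η ∈ Θ.adjoint.domain :=
        LinearPMap.mem_adjoint_domain_of_exists η ⟨-(B.adjoint η), h2⟩
      rwa [hΘeq] at hmem
    have hval : Θ ⟨η, hηdom⟩ = -(B.adjoint η) := by
      have hz0 : ∀ ξ : Θ.domain, (inner ℂ (Θ ⟨η, hηdom⟩ - (-(B.adjoint η))) (ξ : 𝔥₀) : ℂ) = 0 := by
        intro ξ
        rw [inner_sub_left, hsymΘ ⟨η, hηdom⟩ ξ, h2 ξ]
        simp
      exact sub_eq_zero.mp (hperp _ hz0)
    have hBadj : B.adjoint η = J.adjoint (Γ ((starRingEnd ℂ) z) (J η)) := by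
      rw [hB]
      rw [ContinuousLinearMap.adjoint_comp, ContinuousLinearMap.adjoint_comp,
        ContinuousLinearMap.adjoint_adjoint, hΓadj z hz]
      rfl
    obtain ⟨C', hC'0, hC'⟩ := hcoer ((starRingEnd ℂ) z) (hconj' z hz)
    have hle := hC' ⟨η, hηdom⟩
    have hzero : Θ ⟨η, hηdom⟩ + J.adjoint (Γ ((starRingEnd ℂ) z) (J η)) = 0 := by
      rw [hval, ← hBadj]
      abel
    have hle' : C' * ‖η‖ ≤ ‖Θ ⟨η, hηdom⟩ + J.adjoint (Γ ((starRingEnd ℂ) z) (J η))‖ := hle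
    rw [hzero] at hle'
    simp only [norm_zero] at hle'
    have h0 : ‖η‖ = 0 := by nlinarith [norm_nonneg η]
    exact norm_eq_zero.mp h0
  -- surjectivity
  have hsurj : Function.Surjective (fun ζ : Θ.domain => Θ ζ + J.adjoint (Γ z (J (ζ : 𝔥₀)))) := by
    intro y
    haveI : CompleteSpace (LinearMap.range Tlin : Submodule ℂ 𝔥₀) := hclosed.completeSpace_coe
    have htop : (LinearMap.range Tlin : Submodule ℂ 𝔥₀) = ⊤ :=
      Submodule.orthogonal_eq_bot_iff.mp hbot
    have hmem : y ∈ LinearMap.range Tlin := by rw [htop]; trivial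
    obtain ⟨ζ, hζ⟩ := LinearMap.mem_range.mp hmem
    exact ⟨ζ, hζ⟩
  exact ⟨⟨hinj, hsurj⟩, C, hC0, hC⟩
end

section
/- Let T : H → H be a bounded injective operator on a Hilbert space satisfying the resolvent-type identities: there is a family R(z), z ∈ ℂ \ ℝ, of bounded injective operators with (z-w)R(w)R(z) = R(w) - R(z) and R(z)* = R(z̄), with T = R(i). Then the operator A := i - R(i)⁻¹ defined on Range(R(i)) is self-adjoint, provided Range(-A ± i) = H. -/
open scoped InnerProductSpace ComplexConjugate

/-- given a pseudo-resolvent family `R z` of bounded injective operators with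
`(z-w) R(w) R(z) = R(w) - R(z)` and `R(z)* = R(z̄)`, the operator `A := i - R(i)⁻¹` defined on
`Range (R i)` is self-adjoint, provided `Range (-A ± i) = H`. -/
theorem stmt6 {H : Type*}
    [NormedAddCommGroup H] [InnerProductSpace ℂ H] [CompleteSpace H]
    (R : ℂ → (H →L[ℂ] H))
    (hinj : ∀ z : ℂ, z.im ≠ 0 → Function.Injective (R z))
    (hres : ∀ z w : ℂ, z.im ≠ 0 → w.im ≠ 0 →
      (z - w) • ((R w).comp (R z)) = R w - R z)
    (hadj : ∀ z : ℂ, z.im ≠ 0 → (R z).adjoint = R ((starRingEnd ℂ) z))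
    (A : H →ₗ.[ℂ] H)
    (hdom : (A.domain : Set H) = Set.range (R Complex.I))
    (hA : ∀ (y : H) (hy : R Complex.I y ∈ A.domain),
      A ⟨R Complex.I y, hy⟩ = Complex.I • R Complex.I y - y)
    (hsurj₁ : ∀ x : H, ∃ u : A.domain, -(A u) + Complex.I • (u : H) = x)
    (hsurj₂ : ∀ x : H, ∃ u : A.domain, -(A u) - Complex.I • (u : H) = x) :
    IsSelfAdjoint A := by
  have him : (Complex.I).im ≠ 0 := by simp
  have him' : (-Complex.I).im ≠ 0 := by simp
  have hadjI : (R Complex.I).adjoint = R (-Complex.I) := by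
    have := hadj Complex.I him
    rwa [Complex.conj_I] at this
  -- inner product identity
  have h2 : ∀ u v : H, ⟪R Complex.I u, v⟫_ℂ = ⟪u, R (-Complex.I) v⟫_ℂ := by
    intro u v
    rw [← hadjI, ContinuousLinearMap.adjoint_inner_right]
  -- resolvent identity at (i, -i)
  have key : ∀ b : H, R (-Complex.I) b - R Complex.I b
      = (2 * Complex.I) • (R (-Complex.I)) ((R Complex.I) b) := by
    intro b
    have := hres Complex.I (-Complex.I) him him'
    have hb := congrArg (fun f : H →L[ℂ] H => f b) this
    simp only [ContinuousLinearMap.smul_apply, ContinuousLinearMap.comp_apply,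
      ContinuousLinearMap.sub_apply, sub_neg_eq_add] at hb
    rw [← hb]
    ring_nf
  -- density of the domain
  have hdense : Dense (A.domain : Set H) := by
    rw [hdom]
    have hr : Set.range ⇑(R Complex.I) = ((LinearMap.range (R Complex.I : H →ₗ[ℂ] H) : Submodule ℂ H) : Set H) := by
      simp [LinearMap.coe_range]
    rw [hr, Submodule.dense_iff_topologicalClosure_eq_top,
      Submodule.topologicalClosure_eq_top_iff, Submodule.eq_bot_iff]
    intro x hx
    have hx' : R (-Complex.I) x = 0 := by
      apply ext_inner_left ℂ
      intro a
      rw [← h2, inner_zero_right]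
      exact (Submodule.mem_orthogonal _ x).mp hx _ (LinearMap.mem_range_self _ a)
    have := hinj (-Complex.I) him' (by rw [hx', map_zero] : R (-Complex.I) x = R (-Complex.I) 0)
    exact this
  -- symmetry
  have hsymm : A.IsFormalAdjoint A := by
    intro x y
    have hx2 : (x : H) ∈ Set.range ⇑(R Complex.I) := by rw [← hdom]; exact x.2
    have hy2 : (y : H) ∈ Set.range ⇑(R Complex.I) := by rw [← hdom]; exact y.2
    obtain ⟨a, ha⟩ := hx2
    obtain ⟨b, hb⟩ := hy2
    have hxa : x = ⟨R Complex.I a, ha ▸ x.2⟩ := Subtype.ext ha.symm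
    have hyb : y = ⟨R Complex.I b, hb ▸ y.2⟩ := Subtype.ext hb.symm
    rw [hxa, hyb, hA a _, hA b _]
    simp only [Submodule.coe_mk]
    have e1 : ⟪R Complex.I a, b⟫_ℂ = ⟪a, R (-Complex.I) b⟫_ℂ := h2 a b
    have e2 : ⟪R Complex.I a, R Complex.I b⟫_ℂ
        = ⟪a, (R (-Complex.I)) (R Complex.I b)⟫_ℂ := h2 a _
    have e3 : ⟪a, R (-Complex.I) b⟫_ℂ - ⟪a, R Complex.I b⟫_ℂ
        = (2 * Complex.I) * ⟪a, (R (-Complex.I)) (R Complex.I b)⟫_ℂ := by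
      rw [← inner_sub_right, key b, inner_smul_right]
    simp only [inner_sub_left, inner_sub_right, inner_smul_left, inner_smul_right,
      Complex.conj_I, e1, e2]
    linear_combination e3
  have hle : A ≤ A.adjoint := hsymm.le_adjoint hdense
  have hfa := LinearPMap.adjoint_isFormalAdjoint hdense (T := A)
  -- adjoint domain is contained in domain
  have hdomle : A.adjoint.domain ≤ A.domain := by
    intro v hv
    set w := A.adjoint ⟨v, hv⟩ with hw
    obtain ⟨u, hu⟩ := hsurj₁ (-(w - Complex.I • v))
    have hu' : A u - Complex.I • (u : H) = w - Complex.I • v := by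
      have := hu
      rw [neg_add_eq_iff_eq_add] at this
      linear_combination (norm := module) -this
    have claim : ∀ f : A.domain, ⟪A f + Complex.I • (f : H), v - (u : H)⟫_ℂ = 0 := by
      intro f
      have hAfv : ⟪A f, v⟫_ℂ = ⟪(f : H), w⟫_ℂ := by
        have := hfa ⟨v, hv⟩ f
        calc ⟪A f, v⟫_ℂ = conj ⟪v, A f⟫_ℂ := (inner_conj_symm _ _).symm
          _ = conj ⟪w, (f : H)⟫_ℂ := by rw [this]
          _ = ⟪(f : H), w⟫_ℂ := inner_conj_symm _ _
      have hAfu : ⟪A f, (u : H)⟫_ℂ = ⟪(f : H), A u⟫_ℂ := hsymm f u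
      have hIfv : ⟪Complex.I • (f : H), v⟫_ℂ = ⟪(f : H), -(Complex.I • v)⟫_ℂ := by
        rw [inner_smul_left, inner_neg_right, inner_smul_right, Complex.conj_I]; ring
      have hIfu : ⟪Complex.I • (f : H), (u : H)⟫_ℂ = ⟪(f : H), -(Complex.I • (u : H))⟫_ℂ := by
        rw [inner_smul_left, inner_neg_right, inner_smul_right, Complex.conj_I]; ring
      rw [inner_sub_right, inner_add_left, inner_add_left, hAfv, hAfu, hIfv, hIfu,
        ← inner_add_right, ← inner_add_right, ← inner_sub_right]
      have : w + -(Complex.I • v) - (A u + -(Complex.I • (u : H))) = 0 := by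
        have := hu'
        linear_combination (norm := module) -this
      rw [this, inner_zero_right]
    obtain ⟨g, hg⟩ := hsurj₂ (-(v - (u : H)))
    have hg' : A g + Complex.I • (g : H) = v - (u : H) := by
      linear_combination (norm := module) -hg
    have hz : v - (u : H) = 0 := by
      have := claim g
      rw [hg'] at this
      exact inner_self_eq_zero.mp this
    have : v = (u : H) := by rwa [sub_eq_zero] at hz
    exact this ▸ u.2
  have hle' : A.adjoint ≤ A := by
    refine ⟨hdomle, fun x y hxy => ?_⟩
    exact (hle.2 hxy.symm).symm
  rw [LinearPMap.isSelfAdjoint_def]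
  exact le_antisymm hle' hle
end

section
/- Let S be a closed densely defined symmetric operator on a Hilbert space H with deficiency spaces K± = Ker(-S* ± i). Then D(S*) = N ⊕ K₊ ⊕ K₋ orthogonally with respect to the graph inner product of S*, where N = D(S), and S*(φ₀+φ₊+φ₋) = Sφ₀ + iφ₊ - iφ₋. -/
open LinearPMap

noncomputable section VonNeumannAux

variable {H : Type*} [NormedAddCommGroup H] [InnerProductSpace ℂ H] [CompleteSpace H]
  {S : H →ₗ.[ℂ] H}

local notation "⟪" x ", " y "⟫" => @inner ℂ _ _ x y

private lemma vN_key (hdense : Dense (S.domain : Set H)) (hsym : S.IsFormalAdjoint S)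
    (a : S.adjoint.domain) (ha : (a : H) ∈ S.domain) (b : S.adjoint.domain) :
    ⟪(S.adjoint a : H), (b : H)⟫ = ⟪(a : H), (S.adjoint b : H)⟫ := by
  have hST : S ≤ S.adjoint := hsym.le_adjoint hdense
  have hfa : S.adjoint.IsFormalAdjoint S := adjoint_isFormalAdjoint hdense
  have hTa : S.adjoint a = S ⟨(a : H), ha⟩ := (hST.2 (x := ⟨(a : H), ha⟩) (y := a) rfl).symm
  rw [hTa, ← inner_conj_symm, ← hfa b ⟨(a : H), ha⟩, inner_conj_symm]

private lemma vN_orth (hdense : Dense (S.domain : Set H)) (hsym : S.IsFormalAdjoint S) :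
    ∀ a b : S.adjoint.domain,
      (((a : H) ∈ S.domain ∧ S.adjoint b = Complex.I • (b : H)) ∨
       ((a : H) ∈ S.domain ∧ S.adjoint b = -(Complex.I • (b : H))) ∨
       (S.adjoint a = Complex.I • (a : H) ∧ S.adjoint b = -(Complex.I • (b : H)))) →
      (inner ℂ (S.adjoint a) (S.adjoint b) : ℂ) + (inner ℂ (a : H) (b : H) : ℂ) = 0 := by
  intro a b hcase
  rcases hcase with ⟨ha, hb⟩ | ⟨ha, hb⟩ | ⟨ha, hb⟩
  · rw [hb, inner_smul_right, vN_key hdense hsym a ha b, hb, inner_smul_right]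
    linear_combination (inner ℂ (a : H) (b : H) : ℂ) * Complex.I_mul_I
  · rw [hb, inner_neg_right, inner_smul_right, vN_key hdense hsym a ha b, hb, inner_neg_right,
      inner_smul_right]
    linear_combination (inner ℂ (a : H) (b : H) : ℂ) * Complex.I_mul_I
  · rw [ha, hb, inner_neg_right, inner_smul_right, inner_smul_left, Complex.conj_I]
    linear_combination (inner ℂ (a : H) (b : H) : ℂ) * Complex.I_mul_I

private lemma vN_norm_zero (x : S.adjoint.domain)
    (h : (inner ℂ (S.adjoint x) (S.adjoint x) : ℂ) + (inner ℂ (x : H) (x : H) : ℂ) = 0) :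
    x = 0 := by
  rw [inner_self_eq_norm_sq_to_K, inner_self_eq_norm_sq_to_K] at h
  have h2 : ‖(S.adjoint x : H)‖ ^ 2 + ‖(x : H)‖ ^ 2 = (0 : ℝ) :=
    RCLike.ofReal_eq_zero.mp (by exact_mod_cast h)
  have h3 : ‖(x : H)‖ = 0 := by nlinarith [norm_nonneg (S.adjoint x : H), norm_nonneg (x : H)]
  exact Subtype.ext (norm_eq_zero.mp h3)

set_option linter.unnecessarySeqFocus false in
private lemma vN_exists (hdense : Dense (S.domain : Set H)) (hsym : S.IsFormalAdjoint S)
    (hclosed : IsClosed (S.graph : Set (H × H))) (φ : S.adjoint.domain) :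
    ∃ t : S.adjoint.domain × S.adjoint.domain × S.adjoint.domain,
      ((t.1 : H) ∈ S.domain) ∧
      S.adjoint t.2.1 = Complex.I • (t.2.1 : H) ∧
      S.adjoint t.2.2 = -(Complex.I • (t.2.2 : H)) ∧
      φ = t.1 + t.2.1 + t.2.2 := by
  have hST : S ≤ S.adjoint := hsym.le_adjoint hdense
  let eL : WithLp 2 (H × H) ≃ₗ[ℂ] H × H := WithLp.linearEquiv 2 ℂ (H × H)
  let Gs : Submodule ℂ (WithLp 2 (H × H)) :=
    S.graph.comap (eL : WithLp 2 (H × H) →ₗ[ℂ] H × H)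
  have hGc : IsClosed (Gs : Set (WithLp 2 (H × H))) :=
    hclosed.preimage (WithLp.prodContinuousLinearEquiv 2 ℂ H H).continuous
  haveI : CompleteSpace Gs := hGc.completeSpace_coe
  set x : WithLp 2 (H × H) := eL.symm ((φ : H), S.adjoint φ) with hxdef
  obtain ⟨y, hy, z, hz, hxyz⟩ := Gs.exists_add_mem_mem_orthogonal x
  have hy' : eL y ∈ S.graph := hy
  rw [LinearPMap.mem_graph_iff] at hy'
  obtain ⟨ψ₀, hψ1, hψ2⟩ := hy'
  set ψT : S.adjoint.domain := ⟨(ψ₀ : H), hST.1 ψ₀.2⟩ with hψTdef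
  have hψT : S.adjoint ψT = S ψ₀ := (hST.2 (x := ψ₀) (y := ψT) rfl).symm
  set η : S.adjoint.domain := φ - ψT with hηdef
  have hu : eL z = ((η : H), S.adjoint η) := by
    have hzxy : z = x - y := by rw [hxyz]; abel
    rw [hzxy, _root_.map_sub eL, eL.apply_symm_apply]
    have : eL y = ((ψ₀ : H), S ψ₀) := by
      ext
      · exact hψ1.symm
      · exact hψ2.symm
    rw [this, hηdef, LinearPMap.map_sub, hψT]
    rfl
  -- orthogonality relation against the graph of S
  have horth : ∀ ψ : S.domain, ⟪(ψ : H), (η : H)⟫ + ⟪S ψ, (S.adjoint η : H)⟫ = 0 := by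
    intro ψ
    have hw : eL.symm ((ψ : H), S ψ) ∈ Gs := by
      show eL (eL.symm _) ∈ S.graph
      rw [eL.apply_symm_apply]
      exact S.mem_graph ψ
    have h0 := (Submodule.mem_orthogonal Gs z).mp hz _ hw
    rw [WithLp.prod_inner_apply] at h0
    have hf : (eL.symm ((ψ : H), S ψ)).ofLp.1 = (ψ : H) := rfl
    have hs : (eL.symm ((ψ : H), S ψ)).ofLp.2 = S ψ := rfl
    have hzf : z.ofLp.1 = (η : H) := congrArg Prod.fst hu
    have hzs : z.ofLp.2 = (S.adjoint η : H) := congrArg Prod.snd hu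
    rw [hf, hs, hzf, hzs] at h0
    exact h0
  have hconj : ∀ ψ : S.domain, ⟪-(η : H), (ψ : H)⟫ = ⟪(S.adjoint η : H), S ψ⟫ := by
    intro ψ
    have h0 := congrArg (starRingEnd ℂ) (horth ψ)
    simp only [_root_.map_add, inner_conj_symm, _root_.map_zero] at h0
    rw [inner_neg_left]
    linear_combination -h0
  have hmem : (S.adjoint η : H) ∈ S.adjoint.domain :=
    mem_adjoint_domain_of_exists _ ⟨-(η : H), fun ψ => hconj ψ⟩
  set Tη : S.adjoint.domain := ⟨(S.adjoint η : H), hmem⟩ with hTηdef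
  have hTTη : S.adjoint Tη = -(η : H) := adjoint_apply_eq hdense _ fun ψ => hconj ψ
  set φp : S.adjoint.domain := (2⁻¹ : ℂ) • η - (Complex.I * 2⁻¹ : ℂ) • Tη with hφpdef
  set φm : S.adjoint.domain := (2⁻¹ : ℂ) • η + (Complex.I * 2⁻¹ : ℂ) • Tη with hφmdef
  have hcoeTη : (Tη : H) = S.adjoint η := rfl
  have hφp : S.adjoint φp = Complex.I • (φp : H) := by
    rw [hφpdef, LinearPMap.map_sub, LinearPMap.map_smul, LinearPMap.map_smul, hTTη]
    simp only [AddSubgroupClass.coe_sub, SetLike.val_smul, hcoeTη]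
    match_scalars <;> ring_nf <;> simp [Complex.I_sq] <;> norm_num
  have hφm : S.adjoint φm = -(Complex.I • (φm : H)) := by
    rw [hφmdef, LinearPMap.map_add, LinearPMap.map_smul, LinearPMap.map_smul, hTTη]
    simp only [Submodule.coe_add, SetLike.val_smul, hcoeTη]
    match_scalars <;> ring_nf <;> simp [Complex.I_sq] <;> norm_num
  refine ⟨(ψT, φp, φm), ψ₀.2, hφp, hφm, ?_⟩
  have hsum : φp + φm = η := by
    rw [hφpdef, hφmdef]
    match_scalars <;> ring
  show φ = ψT + φp + φm
  rw [add_assoc, hsum, hηdef]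
  abel

end VonNeumannAux

/-- von Neumann decomposition: for a closed densely defined symmetric operator
`S`, every `φ ∈ D(S*)` decomposes uniquely as `φ = φ₀ + φp + φm` with `φ₀ ∈ D(S)`,
`S*φ± = ±i φ±`; the decomposition is orthogonal for the graph inner product of `S*`, and
`S*(φ₀+φp+φm) = Sφ₀ + iφp - iφm`. -/
theorem stmt7 {H : Type*}
    [NormedAddCommGroup H] [InnerProductSpace ℂ H] [CompleteSpace H]
    (S : H →ₗ.[ℂ] H)
    (hdense : Dense (S.domain : Set H))
    (hsym : S.IsFormalAdjoint S)
    (hclosed : IsClosed (S.graph : Set (H × H))) :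
    (∀ φ : S.adjoint.domain,
      ∃! t : S.adjoint.domain × S.adjoint.domain × S.adjoint.domain,
        ((t.1 : H) ∈ S.domain) ∧
        S.adjoint t.2.1 = Complex.I • (t.2.1 : H) ∧
        S.adjoint t.2.2 = -(Complex.I • (t.2.2 : H)) ∧
        φ = t.1 + t.2.1 + t.2.2) ∧
    (∀ a b : S.adjoint.domain,
      (((a : H) ∈ S.domain ∧ S.adjoint b = Complex.I • (b : H)) ∨
       ((a : H) ∈ S.domain ∧ S.adjoint b = -(Complex.I • (b : H))) ∨
       (S.adjoint a = Complex.I • (a : H) ∧ S.adjoint b = -(Complex.I • (b : H)))) →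
      (inner ℂ (S.adjoint a) (S.adjoint b) : ℂ) + (inner ℂ (a : H) (b : H) : ℂ) = 0) ∧
    (∀ (φ₀ φp φm : S.adjoint.domain) (h₀ : (φ₀ : H) ∈ S.domain),
      S.adjoint φp = Complex.I • (φp : H) →
      S.adjoint φm = -(Complex.I • (φm : H)) →
      S.adjoint (φ₀ + φp + φm) =
        S ⟨(φ₀ : H), h₀⟩ + Complex.I • (φp : H) - Complex.I • (φm : H)) := by
  have hST : S ≤ S.adjoint := hsym.le_adjoint hdense
  refine ⟨?_, vN_orth hdense hsym, ?_⟩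
  · -- existence and uniqueness
    intro φ
    obtain ⟨t₀, ht₀⟩ := vN_exists hdense hsym hclosed φ
    refine ⟨t₀, ht₀, ?_⟩
    rintro ⟨a, p, m⟩ ⟨ha, hp, hm, hsum⟩
    obtain ⟨ha₀, hp₀, hm₀, hsum₀⟩ := ht₀
    obtain ⟨a₀, p₀, m₀⟩ := t₀
    simp only at ha₀ hp₀ hm₀ hsum₀ ha hp hm hsum ⊢
    -- the graph inner product
    set W : S.adjoint.domain → S.adjoint.domain → ℂ := fun u v =>
      (inner ℂ (S.adjoint u) (S.adjoint v) : ℂ) + (inner ℂ (u : H) (v : H) : ℂ) with hWdef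
    have hWadd : ∀ u v w, W u (v + w) = W u v + W u w := by
      intro u v w
      simp only [hWdef, LinearPMap.map_add, Submodule.coe_add, inner_add_right]
      ring
    have hWzero : ∀ u, W u 0 = 0 := by
      intro u
      simp only [hWdef, LinearPMap.map_zero, ZeroMemClass.coe_zero, inner_zero_right, add_zero]
    have hδsum : (a - a₀) + (p - p₀) + (m - m₀) = 0 := by
      have h := hsum.symm.trans hsum₀
      rw [show (a - a₀) + (p - p₀) + (m - m₀) = (a + p + m) - (a₀ + p₀ + m₀) by abel, h,
        sub_self]
    have hδa_mem : ((a - a₀ : S.adjoint.domain) : H) ∈ S.domain := by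
      rw [AddSubgroupClass.coe_sub]
      exact sub_mem ha ha₀
    have hδp : S.adjoint (p - p₀) = Complex.I • ((p - p₀ : S.adjoint.domain) : H) := by
      rw [LinearPMap.map_sub, hp, hp₀, AddSubgroupClass.coe_sub, smul_sub]
    have hδm : S.adjoint (m - m₀) = -(Complex.I • ((m - m₀ : S.adjoint.domain) : H)) := by
      rw [LinearPMap.map_sub, hm, hm₀, AddSubgroupClass.coe_sub, smul_sub]
      abel
    have h1 : W (a - a₀) (p - p₀) = 0 := vN_orth hdense hsym _ _ (Or.inl ⟨hδa_mem, hδp⟩)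
    have h2 : W (a - a₀) (m - m₀) = 0 := vN_orth hdense hsym _ _ (Or.inr (Or.inl ⟨hδa_mem, hδm⟩))
    have h3 : W (p - p₀) (m - m₀) = 0 := vN_orth hdense hsym _ _ (Or.inr (Or.inr ⟨hδp, hδm⟩))
    have hWa : W (a - a₀) (a - a₀) = 0 := by
      have h4 : W (a - a₀) ((a - a₀) + ((p - p₀) + (m - m₀))) = 0 := by
        rw [show (a - a₀) + ((p - p₀) + (m - m₀)) = (a - a₀) + (p - p₀) + (m - m₀) by abel,
          hδsum, hWzero]
      rw [hWadd, hWadd, h1, h2] at h4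
      simpa using h4
    have hδa0 : a - a₀ = 0 := vN_norm_zero _ hWa
    have hpm : (p - p₀) + (m - m₀) = 0 := by
      rw [hδa0, zero_add] at hδsum
      exact hδsum
    have hWp : W (p - p₀) (p - p₀) = 0 := by
      have h4 : W (p - p₀) ((p - p₀) + (m - m₀)) = 0 := by rw [hpm, hWzero]
      rw [hWadd, h3] at h4
      simpa using h4
    have hδp0 : p - p₀ = 0 := vN_norm_zero _ hWp
    have hδm0 : m - m₀ = 0 := by
      rw [hδp0, zero_add] at hpm
      exact hpm
    exact Prod.ext (sub_eq_zero.mp hδa0) (Prod.ext (sub_eq_zero.mp hδp0) (sub_eq_zero.mp hδm0))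
  · -- the action formula
    intro φ₀ φp φm h₀ hp hm
    have h1 : S.adjoint φ₀ = S ⟨(φ₀ : H), h₀⟩ := (hST.2 (x := ⟨(φ₀ : H), h₀⟩) (y := φ₀) rfl).symm
    rw [LinearPMap.map_add, LinearPMap.map_add, h1, hp, hm, sub_eq_add_neg]
end

section
/- Let Θ be a self-adjoint operator in a closed subspace 𝔥₀ of a Hilbert space 𝔥, with orthogonal projection Π onto 𝔥₀, and define (using 𝔥 = 𝔥₀ ⊕ 𝔥₀⊥) the bounded operators B₁ := Θ(-Θ+i)⁻¹ ⊕ 1 and B₂ := (-Θ+i)⁻¹ ⊕ 0. Then {(B₂*ζ, B₁*ζ) : ζ ∈ 𝔥} = {(ζ₁,ζ₂) ∈ 𝔥⊕𝔥 : ζ₁ ∈ D(Θ), Θζ₁ = Πζ₂}. -/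
open scoped InnerProductSpace
open LinearPMap

private lemma aux_pmap_congr {E F : Type*} [AddCommGroup E] [Module ℂ E]
    [AddCommGroup F] [Module ℂ F] {S T : E →ₗ.[ℂ] F} (h : S = T) (x : E)
    (hx : x ∈ S.domain) : S ⟨x, hx⟩ = T ⟨x, h ▸ hx⟩ := by subst h; rfl

set_option maxHeartbeats 1000000 in
/-- for `Θ` self-adjoint in the closed subspace `𝔥₀ ⊆ 𝔥` (realised via the
isometric inclusion `J`, `Π = J J*`), with `C = (-Θ+i)⁻¹` and `T = Θ(-Θ+i)⁻¹` bounded on `𝔥₀`,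
and `B₁ := Θ(-Θ+i)⁻¹ ⊕ 1`, `B₂ := (-Θ+i)⁻¹ ⊕ 0` (blockwise w.r.t. `𝔥 = 𝔥₀ ⊕ 𝔥₀⊥`), one has
`{(B₂*ζ, B₁*ζ) : ζ ∈ 𝔥} = {(ζ₁,ζ₂) : ζ₁ ∈ D(Θ), Θζ₁ = Πζ₂}`. -/
theorem stmt13 {𝔥 𝔥₀ : Type*}
    [NormedAddCommGroup 𝔥] [InnerProductSpace ℂ 𝔥] [CompleteSpace 𝔥]
    [NormedAddCommGroup 𝔥₀] [InnerProductSpace ℂ 𝔥₀] [CompleteSpace 𝔥₀]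
    (J : 𝔥₀ →L[ℂ] 𝔥) (hJ : ∀ x : 𝔥₀, ‖J x‖ = ‖x‖)
    (Θ : 𝔥₀ →ₗ.[ℂ] 𝔥₀) (hΘ : IsSelfAdjoint Θ)
    (C T : 𝔥₀ →L[ℂ] 𝔥₀)
    (hC : ∀ x : 𝔥₀, ∃ hd : C x ∈ Θ.domain,
      Complex.I • C x - Θ ⟨C x, hd⟩ = x)
    (hC' : ∀ u : Θ.domain, C (Complex.I • (u : 𝔥₀) - Θ u) = u)
    (hT : ∀ (x : 𝔥₀) (hd : C x ∈ Θ.domain), T x = Θ ⟨C x, hd⟩)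
    (B₁ B₂ : 𝔥 →L[ℂ] 𝔥)
    (hB₁ : B₁ = (J.comp (T.comp J.adjoint)) +
      (ContinuousLinearMap.id ℂ 𝔥 - J.comp J.adjoint))
    (hB₂ : B₂ = J.comp (C.comp J.adjoint)) :
    Set.range (fun ζ : 𝔥 => (B₂.adjoint ζ, B₁.adjoint ζ)) =
      {p : 𝔥 × 𝔥 | ∃ η : Θ.domain, p.1 = J η ∧ J (Θ η) = J (J.adjoint p.2)} := by
  have hΘ' : Θ.adjoint = Θ := hΘ
  have hdense : Dense (Θ.domain : Set 𝔥₀) := hΘ.dense_domain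
  have hJi : ∀ x y : 𝔥₀, ⟪J x, J y⟫_ℂ = ⟪x, y⟫_ℂ := fun x y =>
    LinearIsometry.inner_map_map ⟨J.toLinearMap, hJ⟩ x y
  have hJJ : ∀ x : 𝔥₀, J.adjoint (J x) = x := fun x => by
    refine ext_inner_left ℂ fun v => ?_
    rw [ContinuousLinearMap.adjoint_inner_right, hJi]
  have hJinj : ∀ x y : 𝔥₀, J x = J y → x = y := fun x y h => by
    have := congrArg J.adjoint h; rwa [hJJ, hJJ] at this
  have hΘC : ∀ (x : 𝔥₀) (hd : C x ∈ Θ.domain),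
      Θ ⟨C x, hd⟩ = Complex.I • C x - x := fun x hd => by
    obtain ⟨hd2, h⟩ := hC x
    have h' : Complex.I • C x - (Θ ⟨C x, hd⟩ : 𝔥₀) = x := h
    rw [sub_eq_iff_eq_add] at h'
    rw [h']
    abel
  have hTx : ∀ x : 𝔥₀, T x = Complex.I • C x - x := fun x => by
    obtain ⟨hd, _⟩ := hC x
    rw [hT x hd, hΘC x hd]
  have hCθ : ∀ u : Θ.domain, C (Θ u) = Complex.I • C u - u := fun u => by
    have h1 : (Θ u : 𝔥₀) = Complex.I • (u : 𝔥₀) - (Complex.I • (u : 𝔥₀) - Θ u) :=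
      (sub_sub_cancel _ _).symm
    rw [h1, _root_.map_sub C, _root_.map_smul C, hC' u]
  have hsym : ∀ u v : Θ.domain, ⟪(Θ u : 𝔥₀), (v : 𝔥₀)⟫_ℂ = ⟪(u : 𝔥₀), (Θ v : 𝔥₀)⟫_ℂ := by
    intro u v
    have hmem : (u : 𝔥₀) ∈ Θ.adjoint.domain := by rw [hΘ']; exact u.2
    have h1 := LinearPMap.adjoint_isFormalAdjoint hdense ⟨(u : 𝔥₀), hmem⟩ v
    rwa [aux_pmap_congr hΘ' _ hmem] at h1
  have hCs' : ∀ u : Θ.domain,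
      C.adjoint (-(Complex.I • (u : 𝔥₀)) - Θ u) = u := fun u => by
    refine ext_inner_left ℂ fun v => ?_
    rw [ContinuousLinearMap.adjoint_inner_right]
    obtain ⟨hd, _⟩ := hC v
    have hs := hsym ⟨C v, hd⟩ u
    rw [hΘC v hd] at hs
    rw [inner_sub_right, inner_neg_right, inner_smul_right, ← hs, inner_sub_left,
      inner_smul_left, Complex.conj_I]
    ring
  have hCs : ∀ x : 𝔥₀, ∃ hd : C.adjoint x ∈ Θ.domain,
      Θ ⟨C.adjoint x, hd⟩ = -(Complex.I • C.adjoint x) - x := fun x => by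
    have key : ∀ u : Θ.domain,
        ⟪-(Complex.I • C.adjoint x) - x, (u : 𝔥₀)⟫_ℂ = ⟪C.adjoint x, (Θ u : 𝔥₀)⟫_ℂ := by
      intro u
      rw [ContinuousLinearMap.adjoint_inner_left, hCθ u, inner_sub_right, inner_smul_right,
        inner_sub_left, inner_neg_left, inner_smul_left, Complex.conj_I,
        ← ContinuousLinearMap.adjoint_inner_left C]
      ring
    have hmem : C.adjoint x ∈ Θ.adjoint.domain :=
      LinearPMap.mem_adjoint_domain_of_exists _ ⟨_, key⟩
    refine ⟨hΘ' ▸ hmem, ?_⟩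
    have h2 := LinearPMap.adjoint_apply_eq hdense (y := ⟨C.adjoint x, hmem⟩) key
    rwa [aux_pmap_congr hΘ' _ hmem] at h2
  have hTs : ∀ x : 𝔥₀, T.adjoint x = -(Complex.I • C.adjoint x) - x := fun x => by
    refine ext_inner_left ℂ fun v => ?_
    rw [ContinuousLinearMap.adjoint_inner_right, hTx, inner_sub_left, inner_smul_left,
      inner_sub_right, inner_neg_right, inner_smul_right, Complex.conj_I,
      ← ContinuousLinearMap.adjoint_inner_right C]
    ring
  have hB₂s : ∀ ζ : 𝔥, B₂.adjoint ζ = J (C.adjoint (J.adjoint ζ)) := fun ζ => by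
    rw [hB₂, ContinuousLinearMap.adjoint_comp, ContinuousLinearMap.adjoint_comp,
      ContinuousLinearMap.adjoint_adjoint]
    rfl
  have hB₁s : ∀ ζ : 𝔥, B₁.adjoint ζ = J (T.adjoint (J.adjoint ζ)) + (ζ - J (J.adjoint ζ)) := by
    intro ζ
    refine ext_inner_left ℂ fun v => ?_
    rw [ContinuousLinearMap.adjoint_inner_right, hB₁]
    simp only [ContinuousLinearMap.add_apply, ContinuousLinearMap.coe_comp',
      Function.comp_apply, ContinuousLinearMap.sub_apply, ContinuousLinearMap.id_apply,
      inner_add_left, inner_sub_left, inner_add_right, inner_sub_right]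
    rw [← ContinuousLinearMap.adjoint_inner_right J, ← ContinuousLinearMap.adjoint_inner_right J,
      ← ContinuousLinearMap.adjoint_inner_right T, ContinuousLinearMap.adjoint_inner_left J,
      ContinuousLinearMap.adjoint_inner_left J]
  ext p
  constructor
  · rintro ⟨ζ, rfl⟩
    obtain ⟨hd, hval⟩ := hCs (J.adjoint ζ)
    refine ⟨⟨C.adjoint (J.adjoint ζ), hd⟩, hB₂s ζ, ?_⟩
    have hJp : J.adjoint (B₁.adjoint ζ) = T.adjoint (J.adjoint ζ) := by
      rw [hB₁s, _root_.map_add, _root_.map_sub, hJJ, hJJ]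
      abel
    show J (Θ ⟨C.adjoint (J.adjoint ζ), hd⟩) = _
    rw [hval, hJp, hTs]
  · rintro ⟨η, h1, h2⟩
    have h3 : (Θ η : 𝔥₀) = J.adjoint p.2 := hJinj _ _ h2
    set ζ : 𝔥 := J (-(Complex.I • (η : 𝔥₀)) - Θ η) + (p.2 - J (J.adjoint p.2)) with hζ
    have hζJ : J.adjoint ζ = -(Complex.I • (η : 𝔥₀)) - Θ η := by
      simp only [hζ, _root_.map_add, _root_.map_sub, _root_.map_neg, _root_.map_smul, hJJ]
      abel
    refine ⟨ζ, ?_⟩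
    have hfst : B₂.adjoint ζ = p.1 := by
      rw [hB₂s, hζJ, hCs' η, h1]
    have hsnd : B₁.adjoint ζ = p.2 := by
      rw [hB₁s, hζJ, hTs, hCs' η]
      have hTval : -(Complex.I • (η : 𝔥₀)) - (-(Complex.I • (η : 𝔥₀)) - Θ η) = (Θ η : 𝔥₀) := by
        abel
      rw [hTval, h2, hζ]
      abel
    exact Prod.ext hfst hsnd
end

section
/- Let τ : H_A → 𝔥 be bounded and surjective with kernel N, and let M be a closed subspace of H_A with N ⊆ M. Then 𝔥 = τ[M ∩ N⊥] ⊕ τ[M⊥] as a (not necessarily orthogonal) direct sum of closed subspaces: the two images are closed, intersect trivially, and span 𝔥. -/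
/-- for `τ : H_A → 𝔥` bounded surjective with kernel `N`, and a closed subspace
`M` with `N ⊆ M`, one has `𝔥 = τ[M ∩ N⊥] ⊕ τ[M⊥]`: both images are closed, they intersect
trivially, and they span `𝔥`. -/
theorem stmt14 {D 𝔥 : Type*}
    [NormedAddCommGroup D] [InnerProductSpace ℂ D] [CompleteSpace D]
    [NormedAddCommGroup 𝔥] [InnerProductSpace ℂ 𝔥] [CompleteSpace 𝔥]
    (τ : D →L[ℂ] 𝔥) (hτ : Function.Surjective τ)
    (M : Submodule ℂ D) (hM : IsClosed (M : Set D))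
    (hNM : LinearMap.ker (τ : D →ₗ[ℂ] 𝔥) ≤ M) :
    IsClosed ((Submodule.map (τ.toLinearMap) (M ⊓ (LinearMap.ker (τ : D →ₗ[ℂ] 𝔥))ᗮ)) : Set 𝔥) ∧
    IsClosed ((Submodule.map (τ.toLinearMap) Mᗮ) : Set 𝔥) ∧
    (Submodule.map (τ.toLinearMap) (M ⊓ (LinearMap.ker (τ : D →ₗ[ℂ] 𝔥))ᗮ)) ⊓
        (Submodule.map (τ.toLinearMap) Mᗮ) = ⊥ ∧
    (Submodule.map (τ.toLinearMap) (M ⊓ (LinearMap.ker (τ : D →ₗ[ℂ] 𝔥))ᗮ)) ⊔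
        (Submodule.map (τ.toLinearMap) Mᗮ) = ⊤ := by
  set N := LinearMap.ker (τ : D →ₗ[ℂ] 𝔥) with hN
  set K := Nᗮ with hK
  haveI : CompleteSpace N := (ContinuousLinearMap.isClosed_ker τ).completeSpace_coe
  haveI : CompleteSpace M := hM.completeSpace_coe
  -- σ : K →L 𝔥, restriction of τ
  set σ : K →L[ℂ] 𝔥 := τ.comp K.subtypeL with hσ
  have hσ_inj : LinearMap.ker (σ : K →ₗ[ℂ] 𝔥) = ⊥ := by
    rw [LinearMap.ker_eq_bot']
    rintro ⟨x, hx⟩ h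
    have hxN : x ∈ N := h
    have : x ∈ N ⊓ Nᗮ := ⟨hxN, hx⟩
    rw [Submodule.inf_orthogonal_eq_bot] at this
    exact Subtype.ext this
  have hσ_surj : LinearMap.range (σ : K →ₗ[ℂ] 𝔥) = ⊤ := by
    rw [LinearMap.range_eq_top]
    intro y
    obtain ⟨x, hx⟩ := hτ y
    obtain ⟨n, hn, p, hp, rfl⟩ :
        ∃ n ∈ N, ∃ p ∈ Nᗮ, x = n + p := by
      have := Submodule.exists_add_mem_mem_orthogonal (K := N) x
      obtain ⟨n, hn, p, hp, h⟩ := this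
      exact ⟨n, hn, p, hp, h⟩
    refine ⟨⟨p, hp⟩, ?_⟩
    have : τ n = 0 := hn
    simpa [hσ, this] using hx
  set e : K ≃L[ℂ] 𝔥 := ContinuousLinearEquiv.ofBijective σ hσ_inj hσ_surj with he
  have he_apply : ∀ x : K, e x = τ x := fun x => rfl
  -- closedness of images of closed subspaces contained in K
  have key : ∀ S : Submodule ℂ D, IsClosed (S : Set D) → S ≤ K →
      IsClosed ((Submodule.map τ.toLinearMap S : Set 𝔥)) := by
    intro S hS hSK
    have hset : (Submodule.map τ.toLinearMap S : Set 𝔥)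
        = e '' {x : K | (x : D) ∈ S} := by
      ext y
      constructor
      · rintro ⟨s, hs, rfl⟩
        exact ⟨⟨s, hSK hs⟩, hs, rfl⟩
      · rintro ⟨x, hx, rfl⟩
        exact ⟨(x : D), hx, rfl⟩
    rw [hset]
    exact e.toHomeomorph.isClosedMap _ (hS.preimage continuous_subtype_val)
  have hMK : Mᗮ ≤ K := Submodule.orthogonal_le hNM
  have hMNK : M ⊓ Nᗮ ≤ K := inf_le_right
  have hclosed1 : IsClosed ((M ⊓ Nᗮ : Submodule ℂ D) : Set D) := by
    have : ((M ⊓ Nᗮ : Submodule ℂ D) : Set D) = (M : Set D) ∩ (Nᗮ : Set D) := rfl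
    rw [this]
    exact hM.inter N.isClosed_orthogonal
  refine ⟨key _ hclosed1 hMNK, key _ M.isClosed_orthogonal hMK, ?_, ?_⟩
  · -- trivial intersection
    rw [eq_bot_iff]
    rintro y ⟨⟨a, ⟨haM, haK⟩, rfl⟩, ⟨b, hbM, hab⟩⟩
    have hbK : b ∈ K := hMK hbM
    have hker : a - b ∈ N := by
      show τ (a - b) = 0
      have : τ b = τ a := hab
      simp [map_sub, this]
    have habK : a - b ∈ K := Submodule.sub_mem _ haK hbK
    have : a - b ∈ N ⊓ Nᗮ := ⟨hker, habK⟩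
    rw [Submodule.inf_orthogonal_eq_bot] at this
    have hab' : a = b := sub_eq_zero.mp ((Submodule.mem_bot ℂ).mp this)
    have haMM : a ∈ M ⊓ Mᗮ := ⟨haM, hab' ▸ hbM⟩
    rw [Submodule.inf_orthogonal_eq_bot] at haMM
    have : a = 0 := (Submodule.mem_bot ℂ).mp haMM
    simp [this]
  · -- span
    have h1 : N ⊔ (Nᗮ ⊓ M) = M := Submodule.sup_orthogonal_inf_of_hasOrthogonalProjection hNM
    have h2 : Submodule.map τ.toLinearMap (M ⊓ Nᗮ) = Submodule.map τ.toLinearMap M := by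
      conv_rhs => rw [← h1]
      rw [Submodule.map_sup]
      have : Submodule.map τ.toLinearMap N = ⊥ := by
        rw [eq_bot_iff]
        rintro y ⟨x, hx, rfl⟩
        exact hx
      rw [this, bot_sup_eq, inf_comm]
    rw [h2, ← Submodule.map_sup, Submodule.sup_orthogonal_of_hasOrthogonalProjection,
      Submodule.map_top]
    exact LinearMap.range_eq_top.mpr hτ
end
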